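/- arXiv:2502.01082 — 3 statements merged into one kernel-verified Lean document; each statement's English description precedes it below -/
import Mathlib

section
/- Suppose the structure on ℝ is d-minimal. Then the set of critical values of any definable nondegenerate function (a definable C² function on a D² submanifold all of whose critical points are nondegenerate) has dimension at most zero. -/
open FirstOrder Set Filter Topology
open scoped Classical

noncomputable section

namespace DMinPaper

variable (L : FirstOrder.Language) [L.Structure ℝ]

/-- A subset of `ℝ^α` is definable (with parameters from `ℝ`) in the structure `L`. -/
def IsDef {α : Type} (s : Set (α → ℝ)) : Prop :=
  (Set.univ : Set ℝ).Definable L s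

/-- Definability of an `ℝ`-valued function on a subset `M ⊆ ℝ^α`, via its graph. -/
def IsDefFunOn {α : Type} (M : Set (α → ℝ)) (f : (α → ℝ) → ℝ) : Prop :=
  IsDef L {z : (α ⊕ Unit) → ℝ |
    (fun i => z (Sum.inl i)) ∈ M ∧ z (Sum.inr ()) = f (fun i => z (Sum.inl i))}

/-- Definability of a map `M → ℝ^β` on a subset `M ⊆ ℝ^α`, via its graph. -/
def IsDefMapOn {α β : Type} (M : Set (α → ℝ)) (f : (α → ℝ) → (β → ℝ)) : Prop :=
  IsDef L {z : (α ⊕ β) → ℝ |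
    (fun i => z (Sum.inl i)) ∈ M ∧ (fun j => z (Sum.inr j)) = f (fun i => z (Sum.inl i))}

/-- Definability of an `ℝ`-valued function on a subset of a product `ℝ^α × ℝ^β`. -/
def IsDefFun2On {α β : Type} (S : Set ((α → ℝ) × (β → ℝ)))
    (f : (α → ℝ) × (β → ℝ) → ℝ) : Prop :=
  IsDef L {z : ((α ⊕ β) ⊕ Unit) → ℝ |
    ((fun i => z (Sum.inl (Sum.inl i)), fun j => z (Sum.inl (Sum.inr j))) ∈ S) ∧
    z (Sum.inr ()) = f (fun i => z (Sum.inl (Sum.inl i)), fun j => z (Sum.inl (Sum.inr j)))}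

/-- Definability of a map into `ℝ^γ` on a subset of a product `ℝ^α × ℝ^β`. -/
def IsDefMap2On {α β γ : Type} (S : Set ((α → ℝ) × (β → ℝ)))
    (f : (α → ℝ) × (β → ℝ) → (γ → ℝ)) : Prop :=
  IsDef L {z : ((α ⊕ β) ⊕ γ) → ℝ |
    ((fun i => z (Sum.inl (Sum.inl i)), fun j => z (Sum.inl (Sum.inr j))) ∈ S) ∧
    (fun l => z (Sum.inr l)) = f (fun i => z (Sum.inl (Sum.inl i)), fun j => z (Sum.inl (Sum.inr j)))}

/-- Definability of a function `ℝ → ℝ`, via its graph. -/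
def IsDefFunR (f : ℝ → ℝ) : Prop :=
  IsDef L {z : Fin 2 → ℝ | z 1 = f (z 0)}

/-- The structure expands the ordered field of real numbers: the order, addition and
multiplication are definable. -/
def ExpandsOrderedField : Prop :=
  IsDef L {x : Fin 2 → ℝ | x 0 < x 1} ∧
  IsDef L {x : Fin 3 → ℝ | x 2 = x 0 + x 1} ∧
  IsDef L {x : Fin 3 → ℝ | x 2 = x 0 * x 1}

/-- A discrete subset of `ℝ`. -/
def IsDiscreteSet (D : Set ℝ) : Prop :=
  ∀ x ∈ D, ∃ U : Set ℝ, IsOpen U ∧ U ∩ D = {x}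

/-- d-minimality: the structure expands the ordered field of reals, and in every definable
family of subsets of `ℝ` each fiber is the union of an open set and `N` discrete sets, where
`N` does not depend on the parameter. -/
def DMinimal : Prop :=
  ExpandsOrderedField L ∧
  ∀ (k : ℕ) (S : Set ((Fin k ⊕ Unit) → ℝ)), IsDef L S →
    ∃ N : ℕ, ∀ a : Fin k → ℝ,
      ∃ (U : Set ℝ) (D : Fin N → Set ℝ),
        IsOpen U ∧ (∀ i, IsDiscreteSet (D i)) ∧
        {t : ℝ | Sum.elim a (fun _ => t) ∈ S} = U ∪ ⋃ i, D i

variable {E F : Type} [NormedAddCommGroup E] [NormedSpace ℝ E]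
  [NormedAddCommGroup F] [NormedSpace ℝ F]

/-- `f` is of class `C^p` on `M` (as a function on the submanifold `M`): near each point of `M`
it coincides on `M` with a `C^p` function defined on an ambient open set. -/
def CpOn (p : ℕ) (f : E → F) (M : Set E) : Prop :=
  ∀ x ∈ M, ∃ (U : Set E) (g : E → F),
    IsOpen U ∧ x ∈ U ∧ ContDiffOn ℝ p g U ∧ Set.EqOn f g (M ∩ U)

/-- The tangent vectors to `M` at `x`: velocities of differentiable curves through `x`
staying in `M`. -/
def TangentVecs (M : Set E) (x : E) : Set E :=
  {v | ∃ γ : ℝ → E, γ 0 = x ∧ (∀ᶠ t in 𝓝 (0:ℝ), γ t ∈ M) ∧ HasDerivAt γ v 0}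

/-- The differential of `f : M → N` at `x` is surjective onto the tangent space of `N`
at `f x`. -/
def SubmersionAtOn (f : E → F) (M : Set E) (N : Set F) (x : E) : Prop :=
  ∀ w ∈ TangentVecs N (f x), ∃ (γ : ℝ → E) (v : E),
    γ 0 = x ∧ (∀ᶠ t in 𝓝 (0:ℝ), γ t ∈ M) ∧ HasDerivAt γ v 0 ∧
    HasDerivAt (fun t => f (γ t)) w 0

/-- `x` is a critical point of `f : M → ℝ`: the differential of `f` at `x` vanishes on all
tangent vectors of `M` at `x`. -/
def IsCritPtOn (f : E → ℝ) (M : Set E) (x : E) : Prop :=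
  x ∈ M ∧ ∀ (γ : ℝ → E) (v : E), γ 0 = x → (∀ᶠ t in 𝓝 (0:ℝ), γ t ∈ M) →
    HasDerivAt γ v 0 → HasDerivAt (fun t => f (γ t)) 0 0

/-- `x` is a nondegenerate critical point of `f : M → ℝ` on the `d`-dimensional submanifold
`M`: in a local `C²` parametrization `ψ` of `M` at `x`, the Hessian of `f ∘ ψ` is a
nondegenerate bilinear form. -/
def IsNondegCritPtOn (f : E → ℝ) (M : Set E) (d : ℕ) (x : E) : Prop :=
  IsCritPtOn f M x ∧
  ∃ (W : Set (Fin d → ℝ)) (ψ : (Fin d → ℝ) → E) (w0 : Fin d → ℝ),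
    IsOpen W ∧ w0 ∈ W ∧ ContDiffOn ℝ 2 ψ W ∧ ψ w0 = x ∧ Set.MapsTo ψ W M ∧
    Function.Injective (fun u => fderiv ℝ ψ w0 u) ∧
    ∀ v : Fin d → ℝ, v ≠ 0 → ∃ w : Fin d → ℝ,
      iteratedFDeriv ℝ 2 (fun z => f (ψ z)) w0 ![v, w] ≠ 0

/-- `f` is a Morse function on the `d`-dimensional submanifold `M`: all critical points are
nondegenerate and distinct critical points have distinct critical values. -/
def IsMorseOn (f : E → ℝ) (M : Set E) (d : ℕ) : Prop :=
  (∀ x, IsCritPtOn f M x → IsNondegCritPtOn f M d x) ∧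
  ∀ x y, IsCritPtOn f M x → IsCritPtOn f M y → x ≠ y → f x ≠ f y

/-- `M ⊆ ℝⁿ` is a definable `C^p` submanifold of dimension `d`: `M` is definable and every
point of `M` has a definable `C^p` chart of `ℝⁿ` flattening `M` onto `ℝ^d × {0}`. -/
def IsDpSubmanifold (p : ℕ) {n : ℕ} (d : ℕ) (M : Set (Fin n → ℝ)) : Prop :=
  IsDef L M ∧ d ≤ n ∧
  ∀ x ∈ M, ∃ (U V : Set (Fin n → ℝ)) (φ ψ : (Fin n → ℝ) → (Fin n → ℝ)),
    IsOpen U ∧ x ∈ U ∧ IsOpen V ∧ (0 : Fin n → ℝ) ∈ V ∧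
    IsDef L U ∧ IsDef L V ∧ IsDefMapOn L U φ ∧ IsDefMapOn L V ψ ∧
    ContDiffOn ℝ p φ U ∧ ContDiffOn ℝ p ψ V ∧
    Set.MapsTo φ U V ∧ Set.MapsTo ψ V U ∧
    (∀ y ∈ U, ψ (φ y) = y) ∧ (∀ y ∈ V, φ (ψ y) = y) ∧
    φ x = 0 ∧ φ '' (M ∩ U) = V ∩ {y | ∀ i : Fin n, d ≤ (i : ℕ) → y i = 0}

/-- The definable set `X ⊆ ℝⁿ` has dimension at least `d`: some projection of `X` onto `d`
of the coordinates has nonempty interior. -/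
def hasDimGE {n : ℕ} (X : Set (Fin n → ℝ)) (d : ℕ) : Prop :=
  ∃ ι : Fin d → Fin n, StrictMono ι ∧ (interior ((fun x => fun i => x (ι i)) '' X)).Nonempty

/-- The dimension of `X ⊆ ℝⁿ`: the largest `d` such that some coordinate projection of `X`
onto `ℝ^d` has nonempty interior; `⊥` (i.e. `-∞`) for the empty set. -/
noncomputable def dimDef {n : ℕ} (X : Set (Fin n → ℝ)) : WithBot ℕ :=
  if X.Nonempty then ((sSup {d : ℕ | hasDimGE X d} : ℕ) : WithBot ℕ) else ⊥

/-- The coordinate projection `ℝⁿ → ℝ^d` determined by `ι`. -/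
def projc {n d : ℕ} (ι : Fin d → Fin n) (x : Fin n → ℝ) : Fin d → ℝ := fun i => x (ι i)

/-- An open box in `ℝⁿ`: a product of `n` nonempty open intervals. -/
def IsOpenBox {n : ℕ} (U : Set (Fin n → ℝ)) : Prop :=
  ∃ a b : Fin n → ℝ, (∀ i, a i < b i) ∧ U = Set.univ.pi fun i => Set.Ioo (a i) (b i)

/-- `M` is locally, at `x`, the image of a definable `C^p` section `τ` of the coordinate
projection `projc ι`. -/
def MultiGraphPtAt (p : ℕ) {n d : ℕ} (ι : Fin d → Fin n) (M : Set (Fin n → ℝ))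
    (x : Fin n → ℝ) : Prop :=
  ∃ U : Set (Fin n → ℝ), IsOpenBox U ∧ x ∈ U ∧
    ∃ τ : (Fin d → ℝ) → (Fin n → ℝ),
      IsDefMapOn L (projc ι '' U) τ ∧ ContDiffOn ℝ p τ (projc ι '' U) ∧
      M ∩ U = τ '' (projc ι '' U) ∧ ∀ z ∈ projc ι '' U, projc ι (τ z) = z

/-- A `D^p` multi-valued graph with respect to the coordinate projection `projc ι`. -/
def IsMultiGraph (p : ℕ) {n d : ℕ} (ι : Fin d → Fin n) (M : Set (Fin n → ℝ)) : Prop :=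
  IsDpSubmanifold L p d M ∧ ∀ x ∈ M, MultiGraphPtAt L p ι M x

/-- The gradient vector `(∂g/∂x₁, …, ∂g/∂x_d)` of `g : ℝ^d → ℝ` at `z`. -/
noncomputable def gradVec {d : ℕ} (g : (Fin d → ℝ) → ℝ) (z : Fin d → ℝ) : Fin d → ℝ :=
  fun i => fderiv ℝ g z (Pi.single i 1)

/-- The Hessian matrix `(∂²g/∂x_i∂x_j)` of `g : ℝ^d → ℝ` at `z`. -/
noncomputable def hessMat {d : ℕ} (g : (Fin d → ℝ) → ℝ) (z : Fin d → ℝ) :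
    Matrix (Fin d) (Fin d) ℝ :=
  Matrix.of fun i j => fderiv ℝ (fun w => fderiv ℝ g w (Pi.single j 1)) z (Pi.single i 1)

/-- The derivative of `f : M → ℝ` at `x` along the vector field `D`: the common value of
`d_x g (D x)` over all local `C¹` extensions `g` of `f` (and `0` if there is no such common
value). -/
noncomputable def vderiv (M : Set E) (D : E → E) (f : E → ℝ) (x : E) : ℝ :=
  if h : ∃ w : ℝ, ∀ (U : Set E) (g : E → ℝ), IsOpen U → x ∈ U → ContDiffOn ℝ 1 g U →
      Set.EqOn f g (M ∩ U) → fderiv ℝ g x (D x) = w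
  then h.choose else 0

/-- Iterated derivative `D_{α₁} ⋯ D_{α_m} f` of `f : M → ℝ` along a finite family of vector
fields, indexed by a list `α`. -/
noncomputable def vderivIter {k : ℕ} (M : Set E) (D : Fin k → E → E) :
    List (Fin k) → (E → ℝ) → E → ℝ
  | [], f => f
  | i :: l, f => vderiv M (D i) (vderivIter M D l f)

lemma countable_of_isolated {α} [TopologicalSpace α] [SecondCountableTopology α] {C : Set α}
    (h : ∀ x ∈ C, ∃ O, IsOpen O ∧ x ∈ O ∧ ∀ y ∈ O, y ∈ C → y = x) : C.Countable := by
  have hsub : C ⊆ ⋃ v ∈ TopologicalSpace.countableBasis α, {x | x ∈ C ∧ x ∈ v ∧ ∀ y ∈ C, y ∈ v → y = x} := by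
    intro x hx
    obtain ⟨O, hO, hxO, huniq⟩ := h x hx
    obtain ⟨v, hv, hxv, hvO⟩ := (TopologicalSpace.isBasis_countableBasis α).exists_subset_of_mem_open hxO hO
    exact Set.mem_biUnion hv ⟨hx, hxv, fun y hy hyv => huniq y (hvO hyv) hy⟩
  refine Set.Countable.mono hsub ?_
  refine Set.Countable.biUnion (TopologicalSpace.countable_countableBasis α) (fun v _ => ?_)
  refine Set.Subsingleton.countable ?_
  intro a ha b hb
  exact (hb.2.2 a ha.1 ha.2.1).symm ▸ rfl


lemma countable_not_interior {X : Set (Fin 1 → ℝ)} (hc : X.Countable)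
    (h : (interior X).Nonempty) : False := by
  set e : ℝ → (Fin 1 → ℝ) := fun t => fun _ => t with he
  have hecont : Continuous e := by continuity
  have hinj : Function.Injective e := fun a b hab => congrFun hab 0
  have hopen : IsOpen (e ⁻¹' interior X) := isOpen_interior.preimage hecont
  obtain ⟨p, hp⟩ := h
  have hne : (e ⁻¹' interior X).Nonempty := ⟨p 0, by
    have : e (p 0) = p := by funext i; rw [Subsingleton.elim i 0]
    rwa [Set.mem_preimage, this]⟩
  have h1 : (0:ENNReal) < MeasureTheory.volume (e ⁻¹' interior X) := hopen.measure_pos _ hne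
  have h2 : MeasureTheory.volume (e ⁻¹' X) = 0 :=
    Set.Countable.measure_zero (hc.preimage hinj) _
  have h3 : MeasureTheory.volume (e ⁻¹' interior X) ≤ MeasureTheory.volume (e ⁻¹' X) :=
    MeasureTheory.measure_mono (Set.preimage_mono interior_subset)
  rw [h2] at h3
  exact lt_irrefl _ (h1.trans_le h3)


lemma dim_le_zero {X : Set (Fin 1 → ℝ)} (hc : X.Countable) : dimDef X ≤ (0 : WithBot ℕ) := by
  unfold dimDef
  split_ifs with hne
  · have hub : ∀ m ∈ {d : ℕ | hasDimGE X d}, m ≤ 0 := by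
      intro m hm
      obtain ⟨ι, hι, hint⟩ := hm
      have hm1 : m ≤ 1 := by simpa using Fintype.card_le_of_injective ι hι.injective
      interval_cases m
      · exact le_refl 0
      · exfalso
        have hid : (fun (x : Fin 1 → ℝ) => fun i => x (ι i)) = id := by
          funext x i; rw [Subsingleton.elim (ι i) i]; rfl
        rw [hid, Set.image_id] at hint
        exact countable_not_interior hc hint
    have h0 : sSup {d : ℕ | hasDimGE X d} ≤ 0 := csSup_le' hub
    exact_mod_cast h0
  · exact bot_le

set_option maxHeartbeats 2000000 in
lemma isolated_crit {n d : ℕ} {M : Set (Fin n → ℝ)} {f : (Fin n → ℝ) → ℝ}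
    (hdn : d ≤ n) {x : Fin n → ℝ}
    {U V : Set (Fin n → ℝ)} {φ χ : (Fin n → ℝ) → Fin n → ℝ}
    (hUo : IsOpen U) (hxU : x ∈ U) (hVo : IsOpen V)
    (hφ : ContDiffOn ℝ 2 φ U) (hχ : ContDiffOn ℝ 2 χ V)
    (hχV : Set.MapsTo χ V U)
    (hinv1 : ∀ y ∈ U, χ (φ y) = y) (hφx : φ x = 0)
    (himg : φ '' (M ∩ U) = V ∩ {y | ∀ i : Fin n, d ≤ (i : ℕ) → y i = 0})
    {U₀ : Set (Fin n → ℝ)} {F : (Fin n → ℝ) → ℝ}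
    (hU₀o : IsOpen U₀) (hxU₀ : x ∈ U₀) (hF : ContDiffOn ℝ 2 F U₀)
    (hfF : Set.EqOn f F (M ∩ U₀))
    (h0V : (0 : Fin n → ℝ) ∈ V)
    (hnd : IsNondegCritPtOn f M d x) :
    ∃ O, IsOpen O ∧ x ∈ O ∧ ∀ y ∈ O, IsCritPtOn f M y → y = x := by
  -- the projection and inclusion
  set P : (Fin n → ℝ) →L[ℝ] (Fin d → ℝ) :=
    ContinuousLinearMap.pi (fun i => ContinuousLinearMap.proj (Fin.castLE hdn i)) with hPdef
  set Eo : (Fin d → ℝ) →L[ℝ] (Fin n → ℝ) :=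
    ContinuousLinearMap.pi
      (fun i : Fin n => if h : (i:ℕ) < d then ContinuousLinearMap.proj (⟨i, h⟩ : Fin d) else 0)
    with hEdef
  have hPE : ∀ z, P (Eo z) = z := by
    intro z; funext i
    have hi : ((Fin.castLE hdn i : Fin n) : ℕ) < d := i.isLt
    simp [hPdef, hEdef, ContinuousLinearMap.pi_apply, hi]
  have hEP : ∀ y : Fin n → ℝ, (∀ i : Fin n, d ≤ (i:ℕ) → y i = 0) → Eo (P y) = y := by
    intro y hy; funext i
    by_cases h : (i:ℕ) < d
    · simp [hPdef, hEdef, ContinuousLinearMap.pi_apply, h]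
    · simp [hEdef, ContinuousLinearMap.pi_apply, h]
      exact (hy i (le_of_not_gt h)).symm
  have hEslice : ∀ z, ∀ i : Fin n, d ≤ (i:ℕ) → Eo z i = 0 := by
    intro z i hi
    simp [hEdef, ContinuousLinearMap.pi_apply, not_lt.mpr hi]
  -- the domain of the local model
  set Ω : Set (Fin d → ℝ) := Eo ⁻¹' (V ∩ χ ⁻¹' U₀) with hΩdef
  have hΩo : IsOpen Ω :=
    (ContinuousOn.isOpen_inter_preimage hχ.continuousOn hVo hU₀o).preimage Eo.continuous
  have hΩmem : ∀ z ∈ Ω, Eo z ∈ V ∧ χ (Eo z) ∈ U₀ := fun z hz => hz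
  have hmemMU : ∀ z, Eo z ∈ V → χ (Eo z) ∈ M ∩ U := by
    intro z hzV
    have : Eo z ∈ φ '' (M ∩ U) := by
      rw [himg]; exact ⟨hzV, fun i hi => hEslice z i hi⟩
    obtain ⟨m, hm, hφm⟩ := this
    rw [← hφm, hinv1 m hm.2]; exact hm
  -- the local model of f
  set g : (Fin d → ℝ) → ℝ := fun z => F (χ (Eo z)) with hgdef
  have hχE : ContDiffOn ℝ 2 (fun z => χ (Eo z)) Ω := by
    refine hχ.comp (Eo.contDiff.contDiffOn) ?_
    exact fun z hz => hz.1
  have hgC : ContDiffOn ℝ 2 g Ω := by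
    refine hF.comp hχE ?_
    exact fun z hz => hz.2
  have hgf : ∀ z ∈ Ω, g z = f (χ (Eo z)) := by
    intro z hz
    exact (hfF ⟨(hmemMU z hz.1).1, hz.2⟩).symm
  -- criticality implies vanishing gradient of the local model
  have hkey : ∀ z ∈ Ω, IsCritPtOn f M (χ (Eo z)) → fderiv ℝ g z = 0 := by
    intro z hz hc
    apply ContinuousLinearMap.ext
    intro u
    set l : ℝ → (Fin d → ℝ) := fun t => z + t • u with hldef
    have hl0 : l 0 = z := by simp [hldef]
    have hlder : HasDerivAt l u 0 := by
      have h1 : HasDerivAt (fun t : ℝ => t • u) ((1:ℝ) • u) 0 :=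
        (hasDerivAt_id (0:ℝ)).smul_const u
      have h2 := h1.const_add z
      rw [one_smul] at h2
      exact h2
    have hlcont : ContinuousAt l 0 := hlder.continuousAt
    have hEv : ∀ᶠ t in 𝓝 (0:ℝ), l t ∈ Ω := by
      have : Ω ∈ 𝓝 (l 0) := by rw [hl0]; exact hΩo.mem_nhds hz
      exact hlcont this
    have hχEdiff : DifferentiableAt ℝ (fun w => χ (Eo w)) z :=
      ((hχE.differentiableOn (by norm_num)).differentiableAt (hΩo.mem_nhds hz))
    have hγder : HasDerivAt (fun t => χ (Eo (l t))) (fderiv ℝ (fun w => χ (Eo w)) z u) 0 := by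
      have h1 : HasFDerivAt (fun w => χ (Eo w)) (fderiv ℝ (fun w => χ (Eo w)) z) (l 0) := by
        rw [hl0]; exact hχEdiff.hasFDerivAt
      exact h1.comp_hasDerivAt 0 hlder
    have hγ0 : (fun t => χ (Eo (l t))) 0 = χ (Eo z) := by show χ (Eo (l 0)) = _; rw [hl0]
    have hγM : ∀ᶠ t in 𝓝 (0:ℝ), χ (Eo (l t)) ∈ M :=
      hEv.mono fun t ht => (hmemMU _ ht.1).1
    have hcrit := hc.2 _ _ hγ0 hγM hγder
    have hgdiff : DifferentiableAt ℝ g z :=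
      ((hgC.differentiableOn (by norm_num)).differentiableAt (hΩo.mem_nhds hz))
    have hgl : HasDerivAt (fun t => g (l t)) (fderiv ℝ g z u) 0 := by
      have h1 : HasFDerivAt g (fderiv ℝ g z) (l 0) := by rw [hl0]; exact hgdiff.hasFDerivAt
      exact h1.comp_hasDerivAt 0 hlder
    have heq : (fun t => f (χ (Eo (l t)))) =ᶠ[𝓝 (0:ℝ)] fun t => g (l t) :=
      hEv.mono fun t ht => (hgf _ ht).symm
    have hgl0 : HasDerivAt (fun t => g (l t)) 0 0 := heq.hasDerivAt_iff.mp hcrit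
    have := hgl.unique hgl0
    simpa using this
  -- x corresponds to 0
  have hE0 : Eo 0 = 0 := map_zero Eo
  have hχE0 : χ (Eo 0) = x := by rw [hE0, ← hφx, hinv1 x hxU]
  have h0Ω : (0 : Fin d → ℝ) ∈ Ω := by
    constructor
    · rw [hE0]; exact h0V
    · show χ (Eo 0) ∈ U₀; rw [hχE0]; exact hxU₀
  have hgrad0 : fderiv ℝ g 0 = 0 := hkey 0 h0Ω (by rw [hχE0]; exact hnd.1)
  -- transfer the nondegeneracy of the Hessian to the local model
  obtain ⟨hcx, W, θ, w0, hWo, hw0W, hθC, hθw0, hθM, hθinj, hHess⟩ := hnd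
  set W' : Set (Fin d → ℝ) := W ∩ θ ⁻¹' (U ∩ U₀) with hW'def
  have hW'o : IsOpen W' :=
    ContinuousOn.isOpen_inter_preimage hθC.continuousOn hWo (hUo.inter hU₀o)
  have hw0W' : w0 ∈ W' := ⟨hw0W, by rw [Set.mem_preimage, hθw0]; exact ⟨hxU, hxU₀⟩⟩
  have hφθ_slice : ∀ w ∈ W', φ (θ w) ∈ V ∧ ∀ i : Fin n, d ≤ (i:ℕ) → φ (θ w) i = 0 := by
    intro w hw
    have : φ (θ w) ∈ φ '' (M ∩ U) := ⟨θ w, ⟨hθM hw.1, hw.2.1⟩, rfl⟩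
    rw [himg] at this
    exact ⟨this.1, this.2⟩
  set k : (Fin d → ℝ) → (Fin d → ℝ) := fun w => P (φ (θ w)) with hkdef
  have hEk : ∀ w ∈ W', Eo (k w) = φ (θ w) := fun w hw => hEP _ (hφθ_slice w hw).2
  have hkΩ : Set.MapsTo k W' Ω := by
    intro w hw
    constructor
    · show Eo (k w) ∈ V; rw [hEk w hw]; exact (hφθ_slice w hw).1
    · show χ (Eo (k w)) ∈ U₀
      rw [hEk w hw, hinv1 _ hw.2.1]
      exact hw.2.2
  have hχEk : ∀ w ∈ W', χ (Eo (k w)) = θ w := by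
    intro w hw; rw [hEk w hw, hinv1 _ hw.2.1]
  have hgk : Set.EqOn (fun w => g (k w)) (fun w => f (θ w)) W' := by
    intro w hw
    show g (k w) = f (θ w)
    rw [hgf _ (hkΩ hw), hχEk w hw]
  have hθC' : ContDiffOn ℝ 2 θ W' := hθC.mono Set.inter_subset_left
  have hkC : ContDiffOn ℝ 2 k W' := by
    refine P.contDiff.comp_contDiffOn (hφ.comp hθC' ?_)
    exact fun w hw => hw.2.1
  have hk0 : k w0 = 0 := by show P (φ (θ w0)) = 0; rw [hθw0, hφx]; exact map_zero P
  have hθdiff : DifferentiableAt ℝ θ w0 :=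
    (hθC.differentiableOn (by norm_num)).differentiableAt (hWo.mem_nhds hw0W)
  have hφdiff : DifferentiableAt ℝ φ x :=
    (hφ.differentiableOn (by norm_num)).differentiableAt (hUo.mem_nhds hxU)
  have hkdiff : DifferentiableAt ℝ k w0 :=
    (hkC.differentiableOn (by norm_num)).differentiableAt (hW'o.mem_nhds hw0W')
  set A : (Fin d → ℝ) →L[ℝ] (Fin d → ℝ) := fderiv ℝ k w0 with hAdef
  have hgC1 : ContDiffOn ℝ 1 (fderiv ℝ g) Ω := by
    have := (contDiffOn_succ_iff_fderiv_of_isOpen hΩo (n := 1)).mp (hgC.of_le (by norm_num))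
    exact this.2.2
  set Hop : (Fin d → ℝ) →L[ℝ] ((Fin d → ℝ) →L[ℝ] ℝ) := fderiv ℝ (fderiv ℝ g) 0 with hHopdef
  have hfdgdiff : DifferentiableAt ℝ (fderiv ℝ g) 0 :=
    (hgC1.differentiableOn one_ne_zero).differentiableAt (hΩo.mem_nhds h0Ω)
  have hkC1 : ContDiffOn ℝ 1 (fderiv ℝ k) W' := by
    have := (contDiffOn_succ_iff_fderiv_of_isOpen hW'o (n := 1)).mp (hkC.of_le (by norm_num))
    exact this.2.2
  have hfdkdiff : DifferentiableAt ℝ (fderiv ℝ k) w0 :=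
    (hkC1.differentiableOn one_ne_zero).differentiableAt (hW'o.mem_nhds hw0W')
  -- first derivative of g ∘ k near w0
  have step1 : (fun w => fderiv ℝ (fun z => g (k z)) w)
      =ᶠ[𝓝 w0] fun w => (fderiv ℝ g (k w)).comp (fderiv ℝ k w) := by
    filter_upwards [hW'o.mem_nhds hw0W'] with w hw
    have hgd : DifferentiableAt ℝ g (k w) :=
      (hgC.differentiableOn (by norm_num)).differentiableAt (hΩo.mem_nhds (hkΩ hw))
    have hkd : DifferentiableAt ℝ k w :=
      (hkC.differentiableOn (by norm_num)).differentiableAt (hW'o.mem_nhds hw)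
    exact fderiv_comp w hgd hkd
  -- second derivative of g ∘ k at w0
  have hB : HasFDerivAt (fun w => fderiv ℝ g (k w)) (Hop.comp A) w0 := by
    have h1 : HasFDerivAt (fderiv ℝ g) Hop (k w0) := by
      rw [hk0]; exact hfdgdiff.hasFDerivAt
    exact h1.comp w0 hkdiff.hasFDerivAt
  have step2 := hB.clm_comp hfdkdiff.hasFDerivAt
  have step3 : fderiv ℝ (fderiv ℝ (fun z => g (k z))) w0 =
      (ContinuousLinearMap.compL ℝ (Fin d → ℝ) (Fin d → ℝ) ℝ (fderiv ℝ g (k w0))).comp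
          (fderiv ℝ (fderiv ℝ k) w0) +
        ((ContinuousLinearMap.compL ℝ (Fin d → ℝ) (Fin d → ℝ) ℝ).flip (fderiv ℝ k w0)).comp
          (Hop.comp A) := by
    rw [step1.fderiv_eq]
    exact step2.fderiv
  have hDvw : ∀ v w : Fin d → ℝ,
      fderiv ℝ (fderiv ℝ (fun z => g (k z))) w0 v w = Hop (A v) (A w) := by
    intro v w
    rw [step3]
    simp [hk0, hgrad0]
    rfl
  have htransfer : iteratedFDeriv ℝ 2 (fun z => g (k z)) w0 =
      iteratedFDeriv ℝ 2 (fun z => f (θ z)) w0 := by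
    rw [← iteratedFDerivWithin_univ, ← iteratedFDerivWithin_univ]
    have hev : (fun w => g (k w)) =ᶠ[𝓝[Set.univ] w0] (fun w => f (θ w)) := by
      rw [nhdsWithin_univ]
      filter_upwards [hW'o.mem_nhds hw0W'] with w hw
      exact hgk hw
    exact hev.iteratedFDerivWithin_eq (hgk hw0W') 2
  -- nondegeneracy of Hop
  have hiter : ∀ v w : Fin d → ℝ,
      iteratedFDeriv ℝ 2 (fun z => f (θ z)) w0 ![v, w] = Hop (A v) (A w) := by
    intro v w
    rw [← htransfer, iteratedFDeriv_two_apply]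
    have : (![v, w] : Fin 2 → Fin d → ℝ) 0 = v := rfl
    rw [this]
    have h2 : (![v, w] : Fin 2 → Fin d → ℝ) 1 = w := rfl
    rw [h2]
    exact hDvw v w
  -- A is injective, hence surjective
  have hφθdiff : DifferentiableAt ℝ (fun w => φ (θ w)) w0 := by
    have h1 : DifferentiableAt ℝ φ (θ w0) := by rw [hθw0]; exact hφdiff
    exact h1.comp w0 hθdiff
  set N : (Fin d → ℝ) →L[ℝ] (Fin n → ℝ) := fderiv ℝ (fun w => φ (θ w)) w0 with hNdef
  have hAP : A = P.comp N := by
    rw [hAdef, hNdef]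
    exact (P.hasFDerivAt.comp w0 hφθdiff.hasFDerivAt).fderiv
  have hNslice : ∀ u, ∀ i : Fin n, d ≤ (i:ℕ) → N u i = 0 := by
    intro u i hi
    have hev : (fun w => φ (θ w) i) =ᶠ[𝓝 w0] (fun _ => (0:ℝ)) := by
      filter_upwards [hW'o.mem_nhds hw0W'] with w hw
      exact (hφθ_slice w hw).2 i hi
    have h1 : fderiv ℝ (fun w => φ (θ w) i) w0 = 0 := by
      rw [hev.fderiv_eq]; exact fderiv_const_apply 0
    have h2 : fderiv ℝ (fun w => φ (θ w) i) w0 =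
        (ContinuousLinearMap.proj (R := ℝ) (φ := fun _ : Fin n => ℝ) i).comp N := by
      rw [hNdef]
      exact ((ContinuousLinearMap.proj (R := ℝ) (φ := fun _ : Fin n => ℝ) i).hasFDerivAt.comp
        w0 hφθdiff.hasFDerivAt).fderiv
    have := congrArg (fun (T : (Fin d → ℝ) →L[ℝ] ℝ) => T u) (h2.symm.trans h1)
    simpa using this
  have hNθ : ∀ u, N u = fderiv ℝ φ x (fderiv ℝ θ w0 u) := by
    intro u
    have h1 : DifferentiableAt ℝ φ (θ w0) := by rw [hθw0]; exact hφdiff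
    have : N = (fderiv ℝ φ (θ w0)).comp (fderiv ℝ θ w0) := fderiv_comp w0 h1 hθdiff
    rw [this]
    simp [hθw0]
  have hφinj : ∀ m, fderiv ℝ φ x m = 0 → m = 0 := by
    intro m hm
    have hev : (fun y => χ (φ y)) =ᶠ[𝓝 x] id := by
      filter_upwards [hUo.mem_nhds hxU] with y hy
      exact hinv1 y hy
    have hχdiff0 : DifferentiableAt ℝ χ (φ x) := by
      rw [hφx]
      exact (hχ.differentiableOn (by norm_num)).differentiableAt (hVo.mem_nhds h0V)
    have h1 : fderiv ℝ (fun y => χ (φ y)) x = (fderiv ℝ χ (φ x)).comp (fderiv ℝ φ x) :=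
      fderiv_comp x hχdiff0 hφdiff
    have h2 : fderiv ℝ (fun y => χ (φ y)) x = ContinuousLinearMap.id ℝ (Fin n → ℝ) := by
      rw [hev.fderiv_eq]; exact fderiv_id
    have h3 := congrArg (fun (T : (Fin n → ℝ) →L[ℝ] (Fin n → ℝ)) => T m) (h1.symm.trans h2)
    simp only [ContinuousLinearMap.comp_apply, ContinuousLinearMap.id_apply] at h3
    rw [hm] at h3
    simpa using h3.symm
  have hAinj : ∀ u, A u = 0 → u = 0 := by
    intro u hu
    have hN0 : N u = 0 := by
      funext i
      by_cases h : (i:ℕ) < d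
      · have := congrFun hu ⟨(i:ℕ), h⟩
        rw [hAP] at this
        simp only [ContinuousLinearMap.comp_apply] at this
        have hcast : (Fin.castLE hdn ⟨(i:ℕ), h⟩) = i := Fin.ext rfl
        simpa [hPdef, hcast] using this
      · exact hNslice u i (le_of_not_gt h)
    have h1 : fderiv ℝ φ x (fderiv ℝ θ w0 u) = 0 := by rw [← hNθ]; rw [hN0]
    have h2 : fderiv ℝ θ w0 u = 0 := hφinj _ h1
    have h3 : fderiv ℝ θ w0 u = fderiv ℝ θ w0 0 := by rw [h2, map_zero]
    exact hθinj h3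
  have hAinj' : Function.Injective A := by
    intro a b hab
    have : A (a - b) = 0 := by rw [map_sub, hab, sub_self]
    have := hAinj _ this
    exact sub_eq_zero.mp this
  have hAsurj : Function.Surjective A := by
    have := LinearMap.injective_iff_surjective
      (f := ((A : (Fin d → ℝ) →L[ℝ] (Fin d → ℝ)) : (Fin d → ℝ) →ₗ[ℝ] (Fin d → ℝ)))
    exact this.mp hAinj'
  have hH : ∀ u : Fin d → ℝ, u ≠ 0 → ∃ w, Hop u w ≠ 0 := by
    intro u hu
    obtain ⟨v, hv⟩ := hAsurj u
    have hv0 : v ≠ 0 := by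
      rintro rfl
      rw [map_zero] at hv
      exact hu hv.symm
    obtain ⟨w, hw⟩ := hHess v hv0
    rw [hiter v w, hv] at hw
    exact ⟨A w, hw⟩
  -- the gradient map of the local model
  set G : (Fin d → ℝ) → (Fin d → ℝ) := fun z => fun i => fderiv ℝ g z (Pi.single i 1) with hGdef
  have hGC : ContDiffOn ℝ 1 G Ω := by
    rw [hGdef, contDiffOn_pi]
    intro i
    exact (ContinuousLinearMap.apply ℝ ℝ (Pi.single i (1:ℝ))).contDiff.comp_contDiffOn hgC1
  have hG0 : G 0 = 0 := by funext i; simp [hGdef, hgrad0]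
  set G' : (Fin d → ℝ) →L[ℝ] (Fin d → ℝ) :=
    ContinuousLinearMap.pi
      (fun i => (ContinuousLinearMap.apply ℝ ℝ (Pi.single i (1:ℝ))).comp Hop) with hG'def
  have hG'at : HasFDerivAt G G' 0 := by
    rw [hGdef, hG'def]
    apply hasFDerivAt_pi.mpr
    intro i
    exact (ContinuousLinearMap.apply ℝ ℝ (Pi.single i (1:ℝ))).hasFDerivAt.comp 0
      hfdgdiff.hasFDerivAt
  have hG'apply : ∀ u i, G' u i = Hop u (Pi.single i (1:ℝ)) := by
    intro u i; rw [hG'def]; rfl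
  have hG'inj : ∀ u, G' u = 0 → u = 0 := by
    intro u hu
    by_contra hne
    obtain ⟨w, hw⟩ := hH u hne
    apply hw
    have hwsum : w = ∑ i, w i • (Pi.single i (1:ℝ) : Fin d → ℝ) := by
      rw [← Finset.univ_sum_single w]
      refine Finset.sum_congr rfl fun i _ => ?_
      funext j
      by_cases h : j = i
      · subst h; simp
      · simp [Pi.single_eq_of_ne h]
    have hsum : (Hop u) w = ∑ i, w i • (Hop u) ((Pi.single i (1:ℝ) : Fin d → ℝ)) := by
      conv_lhs => rw [hwsum]
      rw [map_sum]
      exact Finset.sum_congr rfl fun i _ => by rw [map_smul]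
    rw [hsum]
    refine Finset.sum_eq_zero fun i _ => ?_
    rw [← hG'apply, hu]
    simp
  have hG'inj' : Function.Injective G' := by
    intro a b hab
    have : G' (a - b) = 0 := by rw [map_sub, hab, sub_self]
    exact sub_eq_zero.mp (hG'inj _ this)
  have hG'surj : Function.Surjective G' := by
    have := LinearMap.injective_iff_surjective
      (f := ((G' : (Fin d → ℝ) →L[ℝ] (Fin d → ℝ)) : (Fin d → ℝ) →ₗ[ℝ] (Fin d → ℝ)))
    exact this.mp hG'inj'
  set e' : (Fin d → ℝ) ≃L[ℝ] (Fin d → ℝ) :=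
    (LinearEquiv.ofBijective
      ((G' : (Fin d → ℝ) →L[ℝ] (Fin d → ℝ)) : (Fin d → ℝ) →ₗ[ℝ] (Fin d → ℝ))
      ⟨hG'inj', hG'surj⟩).toContinuousLinearEquiv with he'def
  have hcoe : (e' : (Fin d → ℝ) →L[ℝ] (Fin d → ℝ)) = G' := by
    ext z
    rfl
  have hGstrict : HasStrictFDerivAt G (e' : (Fin d → ℝ) →L[ℝ] (Fin d → ℝ)) 0 := by
    have h1 : ContDiffAt ℝ 1 G 0 := hGC.contDiffAt (hΩo.mem_nhds h0Ω)
    have h2 := h1.hasStrictFDerivAt one_ne_zero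
    rwa [hG'at.fderiv, ← hcoe] at h2
  have hloc := hGstrict.eventually_left_inverse
  set linv := hGstrict.localInverse G e' 0 with hlinvdef
  have hT : {z : Fin d → ℝ | linv (G z) = z} ∈ 𝓝 0 := hloc
  set T : Set (Fin d → ℝ) := {z | linv (G z) = z} with hTdef
  have h0T : (0 : Fin d → ℝ) ∈ T := mem_of_mem_nhds hT
  -- the isolating neighborhood
  have hPφc : ContinuousOn (fun y => P (φ y)) U := P.continuous.comp_continuousOn hφ.continuousOn
  refine ⟨U₀ ∩ (U ∩ (fun y => P (φ y)) ⁻¹' (interior T ∩ Ω)), ?_, ?_, ?_⟩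
  · exact hU₀o.inter (hPφc.isOpen_inter_preimage hUo (isOpen_interior.inter hΩo))
  · refine ⟨hxU₀, hxU, ?_⟩
    show P (φ x) ∈ interior T ∩ Ω
    rw [hφx, map_zero]
    exact ⟨mem_interior_iff_mem_nhds.mpr hT, h0Ω⟩
  · rintro y ⟨hyU₀, hyU, hyP⟩ hcy
    have hyM := hcy.1
    have hφy : φ y ∈ V ∩ {y | ∀ i : Fin n, d ≤ (i:ℕ) → y i = 0} := by
      rw [← himg]; exact ⟨y, ⟨hyM, hyU⟩, rfl⟩
    have hEz : Eo (P (φ y)) = φ y := hEP _ hφy.2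
    have hχz : χ (Eo (P (φ y))) = y := by rw [hEz, hinv1 y hyU]
    have hzΩ : P (φ y) ∈ Ω := hyP.2
    have hgz : fderiv ℝ g (P (φ y)) = 0 := hkey _ hzΩ (by rw [hχz]; exact hcy)
    have hGz : G (P (φ y)) = 0 := by funext i; simp [hGdef, hgz]
    have hzT : P (φ y) ∈ T := interior_subset hyP.1
    have hlinv0 : linv 0 = 0 := by
      have h2 := h0T
      rw [hTdef, Set.mem_setOf_eq, hG0] at h2
      exact h2
    have hz0 : P (φ y) = 0 := by
      have h1 : linv (G (P (φ y))) = P (φ y) := by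
        have h2 := hzT
        rw [hTdef, Set.mem_setOf_eq] at h2
        exact h2
      rw [hGz, hlinv0] at h1
      exact h1.symm
    have hφy0 : φ y = 0 := by rw [← hEz, hz0, map_zero]
    calc y = χ (φ y) := (hinv1 y hyU).symm
      _ = χ (φ x) := by rw [hφy0, hφx]
      _ = x := hinv1 x hxU

/-- critical values of a definable nondegenerate function have dimension
at most zero. -/
theorem stmt7 (L : FirstOrder.Language) [L.Structure ℝ] (hL : DMinimal L) (n d : ℕ)
    (M : Set (Fin n → ℝ)) (hM : IsDpSubmanifold L 2 d M)
    (f : (Fin n → ℝ) → ℝ) (hfdef : IsDefFunOn L M f) (hfC : CpOn 2 f M)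
    (hnd : ∀ x, IsCritPtOn f M x → IsNondegCritPtOn f M d x) :
    dimDef {y : Fin 1 → ℝ | ∃ x, IsCritPtOn f M x ∧ y = fun _ => f x} ≤
      (0 : WithBot ℕ) := by
  classical
  set C : Set (Fin n → ℝ) := {x | IsCritPtOn f M x} with hCdef
  have hiso : ∀ x ∈ C, ∃ O, IsOpen O ∧ x ∈ O ∧ ∀ y ∈ O, y ∈ C → y = x := by
    intro x hx
    have hx' : IsCritPtOn f M x := hx
    obtain ⟨_, hdn, hch⟩ := hM
    obtain ⟨U, V, φ, ψ, hUo, hxU, hVo, h0V, _, _, _, _, hφC, hψC, hφUV, hψVU, hinv1, hinv2,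
      hφx, himg⟩ := hch x hx'.1
    obtain ⟨U₀, F, hU₀o, hxU₀, hFc, hfF⟩ := hfC x hx'.1
    have hφC' : ContDiffOn ℝ 2 φ U := by exact_mod_cast hφC
    have hψC' : ContDiffOn ℝ 2 ψ V := by exact_mod_cast hψC
    have hFc' : ContDiffOn ℝ 2 F U₀ := by exact_mod_cast hFc
    obtain ⟨O, hOo, hxO, hO⟩ := isolated_crit hdn hUo hxU hVo hφC' hψC' hψVU hinv1 hφx himg
      hU₀o hxU₀ hFc' hfF h0V (hnd x hx')
    exact ⟨O, hOo, hxO, fun y hy hyC => hO y hy hyC⟩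
  have hCc : C.Countable := countable_of_isolated hiso
  have hXc : ({y : Fin 1 → ℝ | ∃ x, IsCritPtOn f M x ∧ y = fun _ => f x}).Countable := by
    have himg : {y : Fin 1 → ℝ | ∃ x, IsCritPtOn f M x ∧ y = fun _ => f x} =
        (fun x => (fun _ : Fin 1 => f x)) '' C := by
      ext y
      constructor
      · rintro ⟨x, hx, rfl⟩; exact ⟨x, hx, rfl⟩
      · rintro ⟨x, hx, rfl⟩; exact ⟨x, hx, rfl⟩
    rw [himg]
    exact hCc.image _
  exact dim_le_zero hXc

end DMinPaper
end
end

section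
/- Let π be the projection of ℝⁿ onto the first d coordinates, let M ⊆ ℝⁿ be a D^p multi-valued graph with respect to π, and let f : M → ℝ be a D^p function. For 1 ≤ k ≤ d, define ∂f/∂x_k : M → ℝ locally by ∂f/∂x_k(x) = ∂(f∘τ)/∂x_k(π(x)), where τ is a local definable C^p section of π parametrizing M near x. Then ∂f/∂x_k is well defined, definable, and of class C^{p−1}. -/
open FirstOrder Set Filter Topology
open scoped Classical

noncomputable section

namespace DMinPaper

variable (L : FirstOrder.Language) [L.Structure ℝ]

variable {E F : Type} [NormedAddCommGroup E] [NormedSpace ℝ E]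
  [NormedAddCommGroup F] [NormedSpace ℝ F]

/-! ### Auxiliary material for Statement 9 -/

section Stmt9Aux

set_option linter.unreachableTactic false
set_option linter.unusedTactic false
set_option linter.unusedSectionVars false

variable {L}

section DefHelpers
variable {α β : Type} [Finite α] [Finite β]

lemma isDef_pull {S : Set (α → ℝ)} (h : IsDef L S) (f : α → β) :
    IsDef L {z : β → ℝ | (fun i => z (f i)) ∈ S} :=
  Set.Definable.preimage_comp f h

lemma isDef_exists {S : Set ((α ⊕ β) → ℝ)} (h : IsDef L S) :
    IsDef L {z : α → ℝ | ∃ w : β → ℝ, Sum.elim z w ∈ S} := by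
  have h2 := Set.Definable.image_comp h (Sum.inl : α → α ⊕ β)
  unfold IsDef
  convert h2 using 1
  ext z
  constructor
  · rintro ⟨w, hw⟩
    exact ⟨Sum.elim z w, hw, rfl⟩
  · rintro ⟨g, hg, rfl⟩
    refine ⟨g ∘ Sum.inr, ?_⟩
    rwa [Sum.elim_comp_inl_inr]

lemma isDef_forall {S : Set ((α ⊕ β) → ℝ)} (h : IsDef L S) :
    IsDef L {z : α → ℝ | ∀ w : β → ℝ, Sum.elim z w ∈ S} := by
  have h2 := (isDef_exists h.compl).compl
  unfold IsDef
  convert h2 using 1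
  all_goals
    ext z
    simp only [mem_compl_iff, mem_setOf_eq, not_exists, not_not]

lemma isDef_exists1 {S : Set ((α ⊕ Unit) → ℝ)} (h : IsDef L S) :
    IsDef L {z : α → ℝ | ∃ t : ℝ, Sum.elim z (fun _ => t) ∈ S} := by
  have h2 := isDef_exists h
  convert h2 using 1
  ext z
  constructor
  · rintro ⟨t, ht⟩
    exact ⟨fun _ => t, ht⟩
  · rintro ⟨w, hw⟩
    refine ⟨w (), ?_⟩
    convert hw using 2
    all_goals (funext u; cases u; rfl)

lemma isDef_forall1 {S : Set ((α ⊕ Unit) → ℝ)} (h : IsDef L S) :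
    IsDef L {z : α → ℝ | ∀ t : ℝ, Sum.elim z (fun _ => t) ∈ S} := by
  have h2 := isDef_forall h
  convert h2 using 1
  ext z
  constructor
  · rintro hz w
    have := hz (w ())
    convert this using 2
    all_goals (funext u; cases u; rfl)
  · rintro hz t
    exact hz (fun _ => t)

variable (hE : ExpandsOrderedField L)
include hE

lemma isDef_ltRel (a b : α) : IsDef L {z : α → ℝ | z a < z b} := by
  have h := isDef_pull hE.1 (![a, b] : Fin 2 → α)
  convert h using 1
  all_goals (ext z; simp)

lemma isDef_addRel (c a b : α) : IsDef L {z : α → ℝ | z c = z a + z b} := by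
  have h := isDef_pull hE.2.1 (![a, b, c] : Fin 3 → α)
  convert h using 1
  all_goals (ext z; simp)

lemma isDef_mulRel (c a b : α) : IsDef L {z : α → ℝ | z c = z a * z b} := by
  have h := isDef_pull hE.2.2 (![a, b, c] : Fin 3 → α)
  convert h using 1
  all_goals (ext z; simp)

lemma isDef_leRel (a b : α) : IsDef L {z : α → ℝ | z a ≤ z b} := by
  have h := (isDef_ltRel hE b a).compl
  unfold IsDef
  convert h using 1
  ext z
  simp [not_lt]

lemma isDef_posRel (a : α) : IsDef L {z : α → ℝ | 0 < z a} := by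
  have h1 : IsDef L ({z : α ⊕ Unit → ℝ | z (.inr ()) = z (.inr ()) + z (.inr ())} ∩
      {z : α ⊕ Unit → ℝ | z (.inr ()) < z (.inl a)}) :=
    (isDef_addRel hE _ _ _).inter (isDef_ltRel hE _ _)
  have h2 := isDef_exists1 h1
  convert h2 using 1
  ext z
  simp only [mem_setOf_eq, mem_inter_iff, Sum.elim_inl, Sum.elim_inr]
  constructor
  · intro hz
    exact ⟨0, by simp, hz⟩
  · rintro ⟨t, ht, hlt⟩
    have : t = 0 := by linarith
    rw [this] at hlt
    exact hlt

end DefHelpers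

section PDFormula

set_option linter.unreachableTactic false
set_option linter.unusedTactic false
set_option linter.unusedSectionVars false

abbrev VO (n : ℕ) : Type := Fin n ⊕ Unit
abbrev V1 (n : ℕ) : Type := VO n ⊕ Unit
abbrev V2 (n : ℕ) : Type := V1 n ⊕ Unit
abbrev V3 (n : ℕ) : Type := V2 n ⊕ Unit
abbrev V4 (n : ℕ) : Type := V3 n ⊕ (Fin n ⊕ Unit)
abbrev W1 (n : ℕ) : Type := V4 n ⊕ Unit
abbrev W2 (n : ℕ) : Type := W1 n ⊕ Unit
abbrev W3 (n : ℕ) : Type := W2 n ⊕ Unit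
abbrev W4 (n : ℕ) : Type := W3 n ⊕ Unit
abbrev W5 (n : ℕ) : Type := W4 n ⊕ Unit
abbrev W6 (n : ℕ) : Type := W5 n ⊕ Unit
abbrev W7 (n : ℕ) : Type := W6 n ⊕ Unit
abbrev W8 (n : ℕ) : Type := W7 n ⊕ Unit

variable {n d : ℕ}

def cX (i : Fin n) : V4 n := .inl (.inl (.inl (.inl (.inl i))))
def cW : V4 n := .inl (.inl (.inl (.inl (.inr ()))))
def cU : V4 n := .inl (.inl (.inl (.inr ())))
def cE : V4 n := .inl (.inl (.inr ()))
def cD : V4 n := .inl (.inr ())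
def cY (i : Fin n) : V4 n := .inr (.inl i)
def cV : V4 n := .inr (.inr ())

def li8 : V4 n → W8 n := fun c =>
  .inl (.inl (.inl (.inl (.inl (.inl (.inl (.inl c)))))))
def cT : W8 n := .inl (.inl (.inl (.inl (.inl (.inl (.inl (.inr ())))))))
def cQ : W8 n := .inl (.inl (.inl (.inl (.inl (.inl (.inr ()))))))
def cH : W8 n := .inl (.inl (.inl (.inl (.inl (.inr ())))))
def cS : W8 n := .inl (.inl (.inl (.inl (.inr ()))))
def cR : W8 n := .inl (.inl (.inl (.inr ())))
def cMS : W8 n := .inl (.inl (.inr ()))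
def cMR : W8 n := .inl (.inr ())
def cO : W8 n := .inr ()

def pdMat (k' : Fin n) : Set (W8 n → ℝ) :=
  {z | z (li8 (cY k')) = z cT + z (li8 (cX k')) ∧
       z cQ = z (li8 cW) * z cT ∧
       z cH = z (li8 cU) + z cQ ∧
       z (li8 cV) = z cS + z cH ∧
       z cR = z (li8 cE) * z cT ∧
       z cO = z cO + z cO ∧
       z cO = z cMS + z cS ∧
       z cO = z cMR + z cR ∧
       ((z cS ≤ z cR ∧ z cMS ≤ z cR) ∨ (z cS ≤ z cMR ∧ z cMS ≤ z cMR))}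

def pdEx7 (k' : Fin n) : Set (W7 n → ℝ) :=
  {z | ∃ t : ℝ, Sum.elim z (fun _ => t) ∈ pdMat k'}
def pdEx6 (k' : Fin n) : Set (W6 n → ℝ) :=
  {z | ∃ t : ℝ, Sum.elim z (fun _ => t) ∈ pdEx7 k'}
def pdEx5 (k' : Fin n) : Set (W5 n → ℝ) :=
  {z | ∃ t : ℝ, Sum.elim z (fun _ => t) ∈ pdEx6 k'}
def pdEx4 (k' : Fin n) : Set (W4 n → ℝ) :=
  {z | ∃ t : ℝ, Sum.elim z (fun _ => t) ∈ pdEx5 k'}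
def pdEx3 (k' : Fin n) : Set (W3 n → ℝ) :=
  {z | ∃ t : ℝ, Sum.elim z (fun _ => t) ∈ pdEx4 k'}
def pdEx2 (k' : Fin n) : Set (W2 n → ℝ) :=
  {z | ∃ t : ℝ, Sum.elim z (fun _ => t) ∈ pdEx3 k'}
def pdEx1 (k' : Fin n) : Set (W1 n → ℝ) :=
  {z | ∃ t : ℝ, Sum.elim z (fun _ => t) ∈ pdEx2 k'}
def pdEx0 (k' : Fin n) : Set (V4 n → ℝ) :=
  {z | ∃ t : ℝ, Sum.elim z (fun _ => t) ∈ pdEx1 k'}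

def pdClose : Set (V4 n → ℝ) :=
  {z | ∀ i : Fin n, z (cY i) < z (cX i) + z cD ∧ z (cX i) < z (cY i) + z cD}
def pdLine (hdn : d ≤ n) (k : Fin d) : Set (V4 n → ℝ) :=
  {z | ∀ j : Fin d, j ≠ k → z (cY (Fin.castLE hdn j)) = z (cX (Fin.castLE hdn j))}
def pdGamY (M : Set (Fin n → ℝ)) (f : (Fin n → ℝ) → ℝ) : Set (V4 n → ℝ) :=
  {z | (fun i => z (cY i)) ∈ M ∧ z cV = f (fun i => z (cY i))}
def pdT4 (hdn : d ≤ n) (k : Fin d) (k' : Fin n) (M : Set (Fin n → ℝ))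
    (f : (Fin n → ℝ) → ℝ) : Set (V4 n → ℝ) :=
  (pdGamY M f ∩ pdClose ∩ pdLine hdn k)ᶜ ∪ pdEx0 k'
def pdT3 (hdn : d ≤ n) (k : Fin d) (k' : Fin n) (M : Set (Fin n → ℝ))
    (f : (Fin n → ℝ) → ℝ) : Set (V3 n → ℝ) :=
  {z | ∀ yv : Fin n ⊕ Unit → ℝ, Sum.elim z yv ∈ pdT4 hdn k k' M f}
def pdT3' (hdn : d ≤ n) (k : Fin d) (k' : Fin n) (M : Set (Fin n → ℝ))
    (f : (Fin n → ℝ) → ℝ) : Set (V3 n → ℝ) :=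
  {z : V3 n → ℝ | 0 < z (.inr ())} ∩ pdT3 hdn k k' M f
def pdT2 (hdn : d ≤ n) (k : Fin d) (k' : Fin n) (M : Set (Fin n → ℝ))
    (f : (Fin n → ℝ) → ℝ) : Set (V2 n → ℝ) :=
  {z | ∃ t : ℝ, Sum.elim z (fun _ => t) ∈ pdT3' hdn k k' M f}
def pdT2' (hdn : d ≤ n) (k : Fin d) (k' : Fin n) (M : Set (Fin n → ℝ))
    (f : (Fin n → ℝ) → ℝ) : Set (V2 n → ℝ) :=
  {z : V2 n → ℝ | 0 < z (.inr ())}ᶜ ∪ pdT2 hdn k k' M f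
def pdT1 (hdn : d ≤ n) (k : Fin d) (k' : Fin n) (M : Set (Fin n → ℝ))
    (f : (Fin n → ℝ) → ℝ) : Set (V1 n → ℝ) :=
  {z | ∀ ef : Unit → ℝ, Sum.elim z ef ∈ pdT2' hdn k k' M f}
def pdGamX (M : Set (Fin n → ℝ)) (f : (Fin n → ℝ) → ℝ) : Set (V1 n → ℝ) :=
  {z | (fun i => z (.inl (.inl i))) ∈ M ∧ z (.inr ()) = f (fun i => z (.inl (.inl i)))}
def pdT0 (hdn : d ≤ n) (k : Fin d) (k' : Fin n) (M : Set (Fin n → ℝ))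
    (f : (Fin n → ℝ) → ℝ) : Set (VO n → ℝ) :=
  {z | ∃ u : ℝ, Sum.elim z (fun _ => u) ∈ pdGamX M f ∩ pdT1 hdn k k' M f}

variable {L : FirstOrder.Language} [L.Structure ℝ]

lemma isDef_fin_forall {α : Type} [Finite α] {m : ℕ} {S : Fin m → Set (α → ℝ)}
    (h : ∀ i, IsDef L (S i)) : IsDef L {z | ∀ i, z ∈ S i} := by
  have h2 := Set.definable_biInter_finset h Finset.univ
  unfold IsDef
  convert h2 using 1
  all_goals (ext z; simp)

variable (hE : ExpandsOrderedField L)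
include hE

lemma isDef_ltAddRel {α : Type} [Finite α] (a b c : α) :
    IsDef L {z : α → ℝ | z a < z b + z c} := by
  have h1 : IsDef L ({z : α ⊕ Unit → ℝ | z (.inr ()) = z (.inl b) + z (.inl c)} ∩
      {z : α ⊕ Unit → ℝ | z (.inl a) < z (.inr ())}) :=
    (isDef_addRel hE _ _ _).inter (isDef_ltRel hE _ _)
  have h2 := isDef_exists1 h1
  convert h2 using 1
  all_goals
    ext z
    simp only [Set.mem_setOf_eq, Set.mem_inter_iff, Sum.elim_inl, Sum.elim_inr]
    constructor
    · intro h; exact ⟨z b + z c, rfl, h⟩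
    · rintro ⟨t, ht, h⟩; rw [ht] at h; exact h

lemma isDef_eqRel {α : Type} [Finite α] (a b : α) :
    IsDef L {z : α → ℝ | z a = z b} := by
  have h2 := (isDef_leRel hE a b).inter (isDef_leRel hE b a)
  unfold IsDef
  convert h2 using 1
  all_goals (ext z; simp [le_antisymm_iff])

lemma isDef_pdMat (k' : Fin n) : IsDef L (pdMat k') :=
  (isDef_addRel hE _ _ _).inter <| (isDef_mulRel hE _ _ _).inter <|
    (isDef_addRel hE _ _ _).inter <| (isDef_addRel hE _ _ _).inter <|
    (isDef_mulRel hE _ _ _).inter <| (isDef_addRel hE _ _ _).inter <|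
    (isDef_addRel hE _ _ _).inter <| (isDef_addRel hE _ _ _).inter <|
    ((isDef_leRel hE _ _).inter (isDef_leRel hE _ _)).union
      ((isDef_leRel hE _ _).inter (isDef_leRel hE _ _))

lemma isDef_pdEx0 (k' : Fin n) : IsDef L (pdEx0 k') :=
  isDef_exists1 <| isDef_exists1 <| isDef_exists1 <| isDef_exists1 <|
    isDef_exists1 <| isDef_exists1 <| isDef_exists1 <| isDef_exists1 <|
    isDef_pdMat hE k'

lemma isDef_pdClose : IsDef L (pdClose (n := n)) := by
  have h : ∀ i : Fin n, IsDef L ({z : V4 n → ℝ | z (cY i) < z (cX i) + z cD} ∩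
      {z : V4 n → ℝ | z (cX i) < z (cY i) + z cD}) :=
    fun i => (isDef_ltAddRel hE _ _ _).inter (isDef_ltAddRel hE _ _ _)
  exact isDef_fin_forall h

lemma isDef_pdLine (hdn : d ≤ n) (k : Fin d) : IsDef L (pdLine hdn k) := by
  have h : ∀ j : Fin d, IsDef L {z : V4 n → ℝ |
      j ≠ k → z (cY (Fin.castLE hdn j)) = z (cX (Fin.castLE hdn j))} := by
    intro j
    by_cases hj : j = k
    · have h2 : IsDef L (Set.univ : Set (V4 n → ℝ)) := Set.definable_univ
      convert h2 using 1
      all_goals (ext z; simp [hj])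
    · have h2 := isDef_eqRel hE (cY (Fin.castLE hdn j)) (cX (Fin.castLE hdn j))
      convert h2 using 1
      all_goals (ext z; simp [hj])
  exact isDef_fin_forall h

lemma isDef_pdT0 (hdn : d ≤ n) (k : Fin d) (k' : Fin n) {M : Set (Fin n → ℝ)}
    {f : (Fin n → ℝ) → ℝ} (hf : IsDefFunOn L M f) : IsDef L (pdT0 hdn k k' M f) := by
  have hGamY : IsDef L (pdGamY M f) :=
    isDef_pull hf (Sum.elim (fun i => cY i) (fun _ => cV))
  have hGamX : IsDef L (pdGamX M f) :=
    isDef_pull hf (Sum.elim (fun i => (Sum.inl (Sum.inl i) : V1 n)) (fun _ => Sum.inr ()))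
  have hT4 : IsDef L (pdT4 hdn k k' M f) :=
    ((hGamY.inter (isDef_pdClose hE)).inter (isDef_pdLine hE hdn k)).compl.union
      (isDef_pdEx0 hE k')
  have hT3 : IsDef L (pdT3 hdn k k' M f) := isDef_forall hT4
  have hT3' : IsDef L (pdT3' hdn k k' M f) := (isDef_posRel hE _).inter hT3
  have hT2 : IsDef L (pdT2 hdn k k' M f) := isDef_exists1 hT3'
  have hT2' : IsDef L (pdT2' hdn k k' M f) := (isDef_posRel hE _).compl.union hT2
  have hT1 : IsDef L (pdT1 hdn k k' M f) := isDef_forall hT2'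
  exact isDef_exists1 (hGamX.inter hT1)

end PDFormula

section PDSem

def PDCond {n d : ℕ} (hdn : d ≤ n) (k : Fin d) (f : (Fin n → ℝ) → ℝ) (M : Set (Fin n → ℝ))
    (x : Fin n → ℝ) (w : ℝ) : Prop :=
  ∀ ε : ℝ, 0 < ε → ∃ δ : ℝ, 0 < δ ∧ ∀ y, y ∈ M →
    (∀ i, |y i - x i| < δ) →
    (∀ j : Fin d, j ≠ k → y (Fin.castLE hdn j) = x (Fin.castLE hdn j)) →
    |f y - f x - w * (y (Fin.castLE hdn k) - x (Fin.castLE hdn k))| ≤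
      |ε * (y (Fin.castLE hdn k) - x (Fin.castLE hdn k))|

lemma abs_le_abs_iff' (s r : ℝ) :
    |s| ≤ |r| ↔ (s ≤ r ∧ -s ≤ r) ∨ (s ≤ -r ∧ -s ≤ -r) := by
  rcases le_total 0 r with h | h
  · rw [abs_of_nonneg h, abs_le]
    constructor
    · rintro ⟨h1, h2⟩; exact Or.inl ⟨h2, by linarith⟩
    · rintro (⟨h1, h2⟩ | ⟨h1, h2⟩) <;> constructor <;> linarith
  · rw [abs_of_nonpos h, abs_le]
    constructor
    · rintro ⟨h1, h2⟩; exact Or.inr ⟨h2, by linarith⟩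
    · rintro (⟨h1, h2⟩ | ⟨h1, h2⟩) <;> constructor <;> linarith

lemma pd_arith (u v w ε xk yk : ℝ) :
    (∃ t q h s r ms mr o : ℝ,
      yk = t + xk ∧ q = w * t ∧ h = u + q ∧ v = s + h ∧ r = ε * t ∧
      o = o + o ∧ o = ms + s ∧ o = mr + r ∧
      ((s ≤ r ∧ ms ≤ r) ∨ (s ≤ mr ∧ ms ≤ mr))) ↔
    |v - u - w * (yk - xk)| ≤ |ε * (yk - xk)| := by
  constructor
  · rintro ⟨t, q, h, s, r, ms, mr, o, h1, h2, h3, h4, h5, h6, h7, h8, h9⟩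
    have ho : o = 0 := by linarith
    have ht : t = yk - xk := by linarith
    have hms : ms = -s := by linarith
    have hmr : mr = -r := by linarith
    have hs : v - u - w * (yk - xk) = s := by rw [← ht]; linarith [h2, h3, h4]
    have hr : ε * (yk - xk) = r := by rw [← ht]; linarith [h5]
    rw [hs, hr, abs_le_abs_iff']
    rw [hms, hmr] at h9
    exact h9
  · intro hle
    refine ⟨yk - xk, w * (yk - xk), u + w * (yk - xk), v - (u + w * (yk - xk)),
      ε * (yk - xk), -(v - (u + w * (yk - xk))), -(ε * (yk - xk)), 0,
      by ring, rfl, rfl, by ring, rfl, by ring, by ring, by ring, ?_⟩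
    rw [show v - u - w * (yk - xk) = v - (u + w * (yk - xk)) from by ring,
      abs_le_abs_iff'] at hle
    exact hle

lemma pdT0_eq {n d : ℕ} (hdn : d ≤ n) (k : Fin d) (M : Set (Fin n → ℝ))
    (f g : (Fin n → ℝ) → ℝ)
    (hg : ∀ x ∈ M, ∀ w : ℝ, g x = w ↔ PDCond hdn k f M x w) :
    {z : (Fin n ⊕ Unit) → ℝ | (fun i => z (Sum.inl i)) ∈ M ∧
      z (Sum.inr ()) = g (fun i => z (Sum.inl i))} =
    pdT0 hdn k (Fin.castLE hdn k) M f := by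
  ext z
  simp only [pdT0, pdGamX, pdT1, pdT2', pdT2, pdT3', pdT3, pdT4, pdGamY, pdClose,
    pdLine, pdEx0, pdEx1, pdEx2, pdEx3, pdEx4, pdEx5, pdEx6, pdEx7, pdMat,
    cX, cY, cW, cU, cE, cD, cV, cT, cQ, cH, cS, cR, cMS, cMR, cO, li8,
    Set.mem_setOf_eq, Set.mem_inter_iff, Set.mem_union, Set.mem_compl_iff,
    Sum.elim_inl, Sum.elim_inr]
  constructor
  · rintro ⟨hxM, hw⟩
    have hPD := (hg _ hxM _).mp hw.symm
    refine ⟨f (fun i => z (Sum.inl i)), ⟨hxM, rfl⟩, ?_⟩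
    intro ef
    by_cases hε : 0 < ef ()
    · obtain ⟨δ, hδ, hP⟩ := hPD (ef ()) hε
      refine Or.inr ⟨δ, hδ, ?_⟩
      intro yv
      by_cases hA : (((fun i => yv (Sum.inl i)) ∈ M ∧
            yv (Sum.inr ()) = f fun i => yv (Sum.inl i)) ∧
          ∀ (i : Fin n), yv (Sum.inl i) < z (Sum.inl i) + δ ∧
            z (Sum.inl i) < yv (Sum.inl i) + δ) ∧
          ∀ (j : Fin d), j ≠ k →
            yv (Sum.inl (Fin.castLE hdn j)) = z (Sum.inl (Fin.castLE hdn j))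
      · obtain ⟨⟨⟨hyM, hyv⟩, hclose⟩, hline⟩ := hA
        refine Or.inr ((pd_arith _ _ _ _ _ _).mpr ?_)
        rw [hyv]
        have hcl : ∀ i : Fin n, |yv (Sum.inl i) - z (Sum.inl i)| < δ := by
          intro i
          rw [abs_sub_lt_iff]
          exact ⟨by linarith [(hclose i).1], by linarith [(hclose i).2]⟩
        exact hP _ hyM hcl (fun j hj => hline j hj)
      · exact Or.inl hA
    · exact Or.inl hε
  · rintro ⟨u, ⟨hxM, hu⟩, hP⟩
    refine ⟨hxM, ?_⟩
    have hPD : PDCond hdn k f M (fun i => z (Sum.inl i)) (z (Sum.inr ())) := by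
      intro ε hε
      rcases hP (fun _ => ε) with h2 | h2
      · exact absurd hε h2
      · obtain ⟨δ, hδ, hyv⟩ := h2
        refine ⟨δ, hδ, ?_⟩
        intro y hyM hclose hline
        rcases hyv (Sum.elim y (fun _ => f y)) with h3 | h3
        · exfalso
          apply h3
          refine ⟨⟨⟨hyM, rfl⟩, fun i => ?_⟩, fun j hj => hline j hj⟩
          have h : -δ < y i - z (Sum.inl i) ∧ y i - z (Sum.inl i) < δ :=
            abs_lt.mp (hclose i)
          show y i < z (Sum.inl i) + δ ∧ z (Sum.inl i) < y i + δ
          exact ⟨by linarith [h.2], by linarith [h.1]⟩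
        · rw [← hu]
          exact (pd_arith _ _ _ _ _ _).mp h3
    exact ((hg _ hxM _).mpr hPD).symm

end PDSem
section PDAnalysis
variable {n d : ℕ}

lemma box_isOpen {B : Set (Fin n → ℝ)} (hB : IsOpenBox B) : IsOpen B := by
  obtain ⟨a, b, hab, rfl⟩ := hB
  exact isOpen_set_pi Set.finite_univ (fun i _ => isOpen_Ioo)

lemma box_proj_isOpen (hdn : d ≤ n) {B : Set (Fin n → ℝ)} (hB : IsOpenBox B) :
    IsOpen (projc (Fin.castLE hdn) '' B) := by
  obtain ⟨a, b, hab, rfl⟩ := hB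
  have himg : projc (Fin.castLE hdn) '' (Set.univ.pi fun i => Set.Ioo (a i) (b i)) =
      Set.univ.pi (fun i : Fin d =>
        Set.Ioo (a (Fin.castLE hdn i)) (b (Fin.castLE hdn i))) := by
    apply Set.Subset.antisymm
    · rintro _ ⟨y, hy, rfl⟩ i _
      exact hy (Fin.castLE hdn i) (Set.mem_univ _)
    · intro zz hzz
      refine ⟨fun i => if h : (i : ℕ) < d then zz ⟨i, h⟩ else (a i + b i) / 2, ?_, ?_⟩
      · intro i _
        show (if h : (i : ℕ) < d then zz ⟨(i : ℕ), h⟩ else (a i + b i) / 2) ∈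
          Set.Ioo (a i) (b i)
        by_cases h : (i : ℕ) < d
        · rw [dif_pos h]
          have h2 : zz ⟨(i : ℕ), h⟩ ∈ Set.Ioo (a (Fin.castLE hdn ⟨(i : ℕ), h⟩))
              (b (Fin.castLE hdn ⟨(i : ℕ), h⟩)) := hzz ⟨(i : ℕ), h⟩ (Set.mem_univ _)
          have h3 : Fin.castLE hdn ⟨(i : ℕ), h⟩ = i := by
            apply Fin.ext; rfl
          rwa [h3] at h2
        · rw [dif_neg h]
          exact ⟨by linarith [hab i], by linarith [hab i]⟩
      · funext i
        show (if h : ((Fin.castLE hdn i : Fin n) : ℕ) < d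
            then zz ⟨((Fin.castLE hdn i : Fin n) : ℕ), h⟩
            else (a (Fin.castLE hdn i) + b (Fin.castLE hdn i)) / 2) = zz i
        rw [dif_pos (show ((Fin.castLE hdn i : Fin n) : ℕ) < d from i.isLt)]
        exact congrArg zz (Fin.ext rfl)
  rw [himg]
  exact isOpen_set_pi Set.finite_univ (fun i _ => isOpen_Ioo)

lemma box_delta {B : Set (Fin n → ℝ)} (hB : IsOpenBox B) {x : Fin n → ℝ} (hx : x ∈ B) :
    ∃ δ > (0:ℝ), ∀ y : Fin n → ℝ, (∀ i, |y i - x i| < δ) → y ∈ B := by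
  obtain ⟨ε, hε, hball⟩ := Metric.isOpen_iff.mp (box_isOpen hB) x hx
  refine ⟨ε, hε, fun y hy => hball ?_⟩
  rw [Metric.mem_ball, dist_pi_lt_iff hε]
  intro i
  rw [Real.dist_eq]
  exact hy i

lemma sec_fix (hdn : d ≤ n) {M B : Set (Fin n → ℝ)} {τ : (Fin d → ℝ) → (Fin n → ℝ)}
    (hgr : M ∩ B = τ '' (projc (Fin.castLE hdn) '' B))
    (hsec : ∀ z ∈ projc (Fin.castLE hdn) '' B, projc (Fin.castLE hdn) (τ z) = z)
    {y : Fin n → ℝ} (hy : y ∈ M ∩ B) : τ (projc (Fin.castLE hdn) y) = y := by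
  rw [hgr] at hy
  obtain ⟨zz, hzz, rfl⟩ := hy
  rw [hsec zz hzz]

lemma sec_mem (hdn : d ≤ n) {M B : Set (Fin n → ℝ)} {τ : (Fin d → ℝ) → (Fin n → ℝ)}
    (hgr : M ∩ B = τ '' (projc (Fin.castLE hdn) '' B))
    {z : Fin d → ℝ} (hz : z ∈ projc (Fin.castLE hdn) '' B) : τ z ∈ M ∩ B := by
  rw [hgr]
  exact Set.mem_image_of_mem τ hz

lemma Lmodel (hdn : d ≤ n) {p : ℕ} {M B : Set (Fin n → ℝ)}
    {τ : (Fin d → ℝ) → (Fin n → ℝ)} {f : (Fin n → ℝ) → ℝ} {x : Fin n → ℝ}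
    (hfC : CpOn p f M) (hbox : IsOpenBox B) (hxM : x ∈ M) (hxB : x ∈ B)
    (hτC : ContDiffOn ℝ p τ (projc (Fin.castLE hdn) '' B))
    (hgr : M ∩ B = τ '' (projc (Fin.castLE hdn) '' B))
    (hsec : ∀ z ∈ projc (Fin.castLE hdn) '' B, projc (Fin.castLE hdn) (τ z) = z) :
    ∃ W : Set (Fin d → ℝ), IsOpen W ∧ projc (Fin.castLE hdn) x ∈ W ∧
      W ⊆ projc (Fin.castLE hdn) '' B ∧ ContDiffOn ℝ p (fun z => f (τ z)) W := by
  obtain ⟨U', F, hU'open, hxU', hFC, hEq⟩ := hfC x hxM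
  have hpBopen : IsOpen (projc (Fin.castLE hdn) '' B) := box_proj_isOpen hdn hbox
  refine ⟨projc (Fin.castLE hdn) '' B ∩ τ ⁻¹' U', ?_, ?_, Set.inter_subset_left, ?_⟩
  · rw [isOpen_iff_mem_nhds]
    intro zz hzz
    have hτcont : ContinuousAt τ zz :=
      hτC.continuousOn.continuousAt (hpBopen.mem_nhds hzz.1)
    exact Filter.inter_mem (hpBopen.mem_nhds hzz.1)
      (hτcont.preimage_mem_nhds (hU'open.mem_nhds hzz.2))
  · refine ⟨Set.mem_image_of_mem _ hxB, ?_⟩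
    show τ _ ∈ U'
    rw [sec_fix hdn hgr hsec ⟨hxM, hxB⟩]
    exact hxU'
  · have h1 : ContDiffOn ℝ p (fun z => F (τ z)) (projc (Fin.castLE hdn) '' B ∩ τ ⁻¹' U') :=
      hFC.comp (hτC.mono Set.inter_subset_left) (fun zz hzz => hzz.2)
    refine h1.congr ?_
    intro zz hzz
    exact hEq ⟨(sec_mem hdn hgr hzz.1).1, hzz.2⟩

lemma Lconsist (hdn : d ≤ n) {p : ℕ} {M B B' : Set (Fin n → ℝ)}
    {τ τ' : (Fin d → ℝ) → (Fin n → ℝ)} {f : (Fin n → ℝ) → ℝ} {x : Fin n → ℝ}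
    (hxM : x ∈ M)
    (hbox : IsOpenBox B) (hxB : x ∈ B)
    (hτC : ContDiffOn ℝ p τ (projc (Fin.castLE hdn) '' B))
    (hgr : M ∩ B = τ '' (projc (Fin.castLE hdn) '' B))
    (hsec : ∀ z ∈ projc (Fin.castLE hdn) '' B, projc (Fin.castLE hdn) (τ z) = z)
    (hbox' : IsOpenBox B') (hxB' : x ∈ B')
    (hgr' : M ∩ B' = τ' '' (projc (Fin.castLE hdn) '' B'))
    (hsec' : ∀ z ∈ projc (Fin.castLE hdn) '' B', projc (Fin.castLE hdn) (τ' z) = z) :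
    fderiv ℝ (fun z => f (τ z)) (projc (Fin.castLE hdn) x) =
      fderiv ℝ (fun z => f (τ' z)) (projc (Fin.castLE hdn) x) := by
  have hpB : IsOpen (projc (Fin.castLE hdn) '' B) := box_proj_isOpen hdn hbox
  have hz0B : projc (Fin.castLE hdn) x ∈ projc (Fin.castLE hdn) '' B :=
    Set.mem_image_of_mem _ hxB
  have hτz0 : τ (projc (Fin.castLE hdn) x) = x := sec_fix hdn hgr hsec ⟨hxM, hxB⟩
  have hcont : ContinuousAt τ (projc (Fin.castLE hdn) x) :=
    hτC.continuousOn.continuousAt (hpB.mem_nhds hz0B)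
  have h1 : ∀ᶠ zz in 𝓝 (projc (Fin.castLE hdn) x), zz ∈ projc (Fin.castLE hdn) '' B :=
    hpB.eventually_mem hz0B
  have h3 : ∀ᶠ zz in 𝓝 (projc (Fin.castLE hdn) x), τ zz ∈ B' := by
    have hBo' : IsOpen B' := box_isOpen hbox'
    have hmem : B' ∈ 𝓝 (τ (projc (Fin.castLE hdn) x)) := by
      rw [hτz0]; exact hBo'.mem_nhds hxB'
    exact hcont hmem
  have hEvEq : τ =ᶠ[𝓝 (projc (Fin.castLE hdn) x)] τ' := by
    filter_upwards [h1, h3] with zz hzB hzτ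
    have hmem : τ zz ∈ M ∩ B' := ⟨(sec_mem hdn hgr hzB).1, hzτ⟩
    have h4 := sec_fix hdn hgr' hsec' hmem
    rw [hsec zz hzB] at h4
    exact h4.symm
  exact Filter.EventuallyEq.fderiv_eq (hEvEq.fun_comp f)

lemma Lchar (hdn : d ≤ n) (k : Fin d) {p : ℕ} (hp : 1 ≤ p)
    {M B : Set (Fin n → ℝ)} {τ : (Fin d → ℝ) → (Fin n → ℝ)}
    {f : (Fin n → ℝ) → ℝ} {x : Fin n → ℝ}
    (hfC : CpOn p f M) (hbox : IsOpenBox B) (hxM : x ∈ M) (hxB : x ∈ B)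
    (hτC : ContDiffOn ℝ p τ (projc (Fin.castLE hdn) '' B))
    (hgr : M ∩ B = τ '' (projc (Fin.castLE hdn) '' B))
    (hsec : ∀ z ∈ projc (Fin.castLE hdn) '' B, projc (Fin.castLE hdn) (τ z) = z)
    (w : ℝ) :
    w = fderiv ℝ (fun z => f (τ z)) (projc (Fin.castLE hdn) x) (Pi.single k 1) ↔
      PDCond hdn k f M x w := by
  set v : Fin d → ℝ := Pi.single k 1 with hv
  set z0 : Fin d → ℝ := projc (Fin.castLE hdn) x with hz0
  obtain ⟨W, hWo, hz0W, hWsub, hWC⟩ := Lmodel hdn hfC hbox hxM hxB hτC hgr hsec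
  set ψ : ℝ → ℝ := fun t => f (τ (z0 + t • v)) with hψ
  set c : ℝ := fderiv ℝ (fun z => f (τ z)) z0 v with hc
  have hτz0 : τ z0 = x := sec_fix hdn hgr hsec ⟨hxM, hxB⟩
  have hdiff : DifferentiableAt ℝ (fun z => f (τ z)) z0 :=
    (hWC.differentiableOn (by exact_mod_cast (show p ≠ 0 by omega))).differentiableAt (hWo.mem_nhds hz0W)
  have hline0 : (fun t : ℝ => z0 + t • v) 0 = z0 := by simp
  have hlc : Continuous (fun t : ℝ => z0 + t • v) :=
    continuous_const.add (continuous_id.smul continuous_const)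
  have hψc : HasDerivAt ψ c 0 := by
    have hsm : HasDerivAt (fun t : ℝ => z0 + t • v) v 0 := by
      simpa using HasDerivAt.const_add z0 ((hasDerivAt_id (0:ℝ)).smul_const v)
    have hF : HasFDerivAt (fun z => f (τ z)) (fderiv ℝ (fun z => f (τ z)) z0)
        ((fun t : ℝ => z0 + t • v) 0) := by
      rw [hline0]; exact hdiff.hasFDerivAt
    exact hF.comp_hasDerivAt 0 hsm
  have hψ0 : ψ 0 = f x := by
    show f (τ (z0 + (0:ℝ) • v)) = f x
    rw [show z0 + (0:ℝ) • v = z0 from by simp, hτz0]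
  have hev2 : ∀ᶠ t in 𝓝 (0:ℝ), z0 + t • v ∈ W := by
    have hW0 : W ∈ 𝓝 ((fun t : ℝ => z0 + t • v) 0) := by
      rw [hline0]; exact hWo.mem_nhds hz0W
    exact hlc.continuousAt.preimage_mem_nhds hW0
  constructor
  · intro hw ε hε
    have hev1 := Asymptotics.isLittleO_iff.mp (hasDerivAt_iff_isLittleO.mp hψc) hε
    obtain ⟨δ1, hδ1, hprop⟩ := Metric.eventually_nhds_iff.mp (hev1.and hev2)
    obtain ⟨δ2, hδ2, hB2⟩ := box_delta hbox hxB
    refine ⟨min δ1 δ2, lt_min hδ1 hδ2, ?_⟩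
    intro y hyM hclose hline
    set t : ℝ := y (Fin.castLE hdn k) - x (Fin.castLE hdn k) with hts
    have hyB : y ∈ B := hB2 y (fun i => (hclose i).trans_le (min_le_right _ _))
    have hπy : projc (Fin.castLE hdn) y = z0 + t • v := by
      funext j
      show y (Fin.castLE hdn j) = x (Fin.castLE hdn j) + t * (Pi.single k 1 : Fin d → ℝ) j
      by_cases hj : j = k
      · subst hj
        rw [Pi.single_eq_same, hts]
        ring
      · rw [Pi.single_eq_of_ne hj, hline j hj]
        ring
    have hτy : τ (z0 + t • v) = y := by
      rw [← hπy]; exact sec_fix hdn hgr hsec ⟨hyM, hyB⟩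
    have htlt : dist t 0 < δ1 := by
      rw [Real.dist_eq, sub_zero]
      exact lt_of_lt_of_le (hclose (Fin.castLE hdn k)) (min_le_left _ _)
    obtain ⟨hb1, _⟩ := hprop htlt
    have hψt : ψ t = f y := by
      show f (τ (z0 + t • v)) = f y
      rw [hτy]
    have harg : f y - f x - w * t = ψ t - ψ 0 - (t - 0) • c := by
      rw [hψt, hψ0, hw, smul_eq_mul]
      ring
    calc |f y - f x - w * t| = ‖ψ t - ψ 0 - (t - 0) • c‖ := by
          rw [Real.norm_eq_abs, harg]
      _ ≤ ε * ‖t - 0‖ := hb1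
      _ = |ε * t| := by
          rw [Real.norm_eq_abs, sub_zero, abs_mul, abs_of_pos hε]
  · intro hPD
    have hpBopen : IsOpen (projc (Fin.castLE hdn) '' B) := box_proj_isOpen hdn hbox
    have hτca : ContinuousAt τ z0 :=
      hτC.continuousOn.continuousAt (hpBopen.mem_nhds (Set.mem_image_of_mem _ hxB))
    have hcont2 : ContinuousAt (fun t : ℝ => τ (z0 + t • v)) 0 := by
      refine ContinuousAt.comp ?_ hlc.continuousAt
      simp only [zero_smul, add_zero]
      exact hτca
    have hψw : HasDerivAt ψ w 0 := by
      rw [hasDerivAt_iff_isLittleO, Asymptotics.isLittleO_iff]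
      intro ε hε
      obtain ⟨δ, hδ, hP⟩ := hPD ε hε
      have hev3 : ∀ᶠ t in 𝓝 (0:ℝ), dist (τ (z0 + t • v)) x < δ := by
        have hball : Metric.ball x δ ∈ 𝓝 ((fun t : ℝ => τ (z0 + t • v)) 0) := by
          have h0 : (fun t : ℝ => τ (z0 + t • v)) 0 = x := by
            show τ (z0 + (0:ℝ) • v) = x
            rw [show z0 + (0:ℝ) • v = z0 from by simp, hτz0]
          rw [h0]
          exact Metric.ball_mem_nhds x hδ
        exact hcont2.preimage_mem_nhds hball
      filter_upwards [hev2, hev3] with t h1 h3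
      have hymem : τ (z0 + t • v) ∈ M ∩ B := sec_mem hdn hgr (hWsub h1)
      have hπy : projc (Fin.castLE hdn) (τ (z0 + t • v)) = z0 + t • v := hsec _ (hWsub h1)
      have hclose : ∀ i, |τ (z0 + t • v) i - x i| < δ := by
        intro i
        rw [← Real.dist_eq]
        exact (dist_pi_lt_iff hδ).mp h3 i
      have hline : ∀ j : Fin d, j ≠ k →
          τ (z0 + t • v) (Fin.castLE hdn j) = x (Fin.castLE hdn j) := by
        intro j hj
        have h4 : τ (z0 + t • v) (Fin.castLE hdn j) = (z0 + t • v) j := congrFun hπy j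
        rw [h4]
        show x (Fin.castLE hdn j) + t * (Pi.single k 1 : Fin d → ℝ) j = x (Fin.castLE hdn j)
        rw [Pi.single_eq_of_ne hj]
        ring
      have hyk : τ (z0 + t • v) (Fin.castLE hdn k) - x (Fin.castLE hdn k) = t := by
        have h4 : τ (z0 + t • v) (Fin.castLE hdn k) = (z0 + t • v) k := congrFun hπy k
        rw [h4]
        show x (Fin.castLE hdn k) + t * (Pi.single k 1 : Fin d → ℝ) k - x (Fin.castLE hdn k) = t
        rw [Pi.single_eq_same]
        ring
      have hineq := hP _ hymem.1 hclose hline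
      rw [hyk] at hineq
      show ‖ψ t - ψ 0 - (t - 0) • w‖ ≤ ε * ‖t - 0‖
      have hψt : ψ t = f (τ (z0 + t • v)) := rfl
      rw [Real.norm_eq_abs, Real.norm_eq_abs, sub_zero, smul_eq_mul, hψt, hψ0]
      calc |f (τ (z0 + t • v)) - f x - t * w|
          = |f (τ (z0 + t • v)) - f x - w * t| := by ring_nf
        _ ≤ |ε * t| := hineq
        _ = ε * |t| := by rw [abs_mul, abs_of_pos hε]
    exact hψw.unique hψc

end PDAnalysis

end Stmt9Aux

/-- partial derivatives on a multi-valued graph are well defined, definable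
and `C^{p-1}`. -/
theorem stmt9 (L : FirstOrder.Language) [L.Structure ℝ] (hL : DMinimal L)
    (p n d : ℕ) (hp : 1 ≤ p) (hdn : d ≤ n)
    (M : Set (Fin n → ℝ)) (hM : IsMultiGraph L p (Fin.castLE hdn) M)
    (f : (Fin n → ℝ) → ℝ) (hfdef : IsDefFunOn L M f) (hfC : CpOn p f M)
    (k : Fin d) :
    ∃ g : (Fin n → ℝ) → ℝ,
      (∀ x ∈ M, ∀ (B : Set (Fin n → ℝ)) (τ : (Fin d → ℝ) → (Fin n → ℝ)),
        IsOpenBox B → x ∈ B →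
        ContDiffOn ℝ p τ (projc (Fin.castLE hdn) '' B) →
        M ∩ B = τ '' (projc (Fin.castLE hdn) '' B) →
        (∀ z ∈ projc (Fin.castLE hdn) '' B, projc (Fin.castLE hdn) (τ z) = z) →
        g x = fderiv ℝ (fun z => f (τ z)) (projc (Fin.castLE hdn) x) (Pi.single k 1)) ∧
      IsDefFunOn L M g ∧ CpOn (p - 1) g M := by
  classical
  obtain ⟨hMsub, hMG⟩ := hM
  simp only [MultiGraphPtAt] at hMG
  choose B hbox hmem τ hτdef hτC hgraph hsec using hMG
  set g : (Fin n → ℝ) → ℝ := fun x => if hx : x ∈ M then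
      fderiv ℝ (fun z => f (τ x hx z)) (projc (Fin.castLE hdn) x) (Pi.single k 1)
    else 0 with hgdef
  have hgval : ∀ x (hx : x ∈ M), g x =
      fderiv ℝ (fun z => f (τ x hx z)) (projc (Fin.castLE hdn) x) (Pi.single k 1) := by
    intro x hx
    simp only [hgdef]
    rw [dif_pos hx]
  refine ⟨g, ?_, ?_, ?_⟩
  · intro x hx B' τ' hbox' hxB' hτ'C hgr' hsec'
    rw [hgval x hx]
    rw [Lconsist hdn hx (hbox x hx) (hmem x hx) (hτC x hx) (hgraph x hx) (hsec x hx)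
      hbox' hxB' hgr' hsec']
  · have hchar : ∀ x ∈ M, ∀ w : ℝ, g x = w ↔ PDCond hdn k f M x w := by
      intro x hx w
      rw [hgval x hx, eq_comm]
      exact Lchar hdn k hp hfC (hbox x hx) hx (hmem x hx) (hτC x hx) (hgraph x hx)
        (hsec x hx) w
    show IsDef L _
    rw [pdT0_eq hdn k M f g hchar]
    exact isDef_pdT0 hL.1 hdn k _ hfdef
  · intro x hx
    obtain ⟨W, hWo, hz0W, hWsub, hWC⟩ :=
      Lmodel hdn hfC (hbox x hx) hx (hmem x hx) (hτC x hx) (hgraph x hx) (hsec x hx)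
    have hπcont : Continuous (projc (Fin.castLE hdn) : (Fin n → ℝ) → (Fin d → ℝ)) :=
      continuous_pi (fun i => continuous_apply _)
    refine ⟨B x hx ∩ (projc (Fin.castLE hdn)) ⁻¹' W,
      fun y => fderiv ℝ (fun zz => f (τ x hx zz)) (projc (Fin.castLE hdn) y) (Pi.single k 1),
      (box_isOpen (hbox x hx)).inter (hWo.preimage hπcont), ⟨hmem x hx, hz0W⟩, ?_, ?_⟩
    · have hcast : ((p - 1 : ℕ) : WithTop ℕ∞) + 1 ≤ ((p : ℕ) : WithTop ℕ∞) := by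
        exact_mod_cast (by omega : p - 1 + 1 ≤ p)
      have hfd : ContDiffOn ℝ (p - 1 : ℕ) (fderiv ℝ (fun zz => f (τ x hx zz))) W :=
        hWC.fderiv_of_isOpen hWo hcast
      have hfd2 : ContDiffOn ℝ (p - 1 : ℕ)
          (fun zz => fderiv ℝ (fun z' => f (τ x hx z')) zz (Pi.single k 1)) W :=
        hfd.clm_apply contDiffOn_const
      have hπ : ContDiff ℝ (p - 1 : ℕ)
          (projc (Fin.castLE hdn) : (Fin n → ℝ) → (Fin d → ℝ)) :=
        contDiff_pi.mpr (fun i => contDiff_apply ℝ ℝ (Fin.castLE hdn i))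
      exact hfd2.comp hπ.contDiffOn (fun y hy => hy.2)
    · intro y hy
      rw [hgval y hy.1]
      rw [Lconsist hdn hy.1 (hbox y hy.1) (hmem y hy.1) (hτC y hy.1) (hgraph y hy.1)
        (hsec y hy.1) (hbox x hx) hy.2.1 (hgraph x hx) (hsec x hx)]

end DMinPaper
end
end

section
/- (Definable choice.) Suppose the structure on ℝ is d-minimal. Let π : ℝ^{m+n} → ℝ^m be a coordinate projection, and let X ⊆ ℝ^m and Y ⊆ ℝ^{m+n} be definable sets with π(Y) = X. Then there exists a definable map φ : X → Y such that π(φ(x)) = x for all x ∈ X. -/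
open FirstOrder Set Filter Topology
open scoped Classical

noncomputable section

namespace DMinPaper

variable (L : FirstOrder.Language) [L.Structure ℝ]

variable {E F : Type} [NormedAddCommGroup E] [NormedSpace ℝ E]
  [NormedAddCommGroup F] [NormedSpace ℝ F]

variable {L}

lemma isDef_preimage {α β : Type} (σ : α → β) {s : Set (α → ℝ)} (h : IsDef L s) :
    IsDef L {z : β → ℝ | (fun i => z (σ i)) ∈ s} :=
  h.preimage_comp σ

lemma isDef_congr {γ : Type} {s t : Set (γ → ℝ)} (h : s = t) (hs : IsDef L s) : IsDef L t :=
  h ▸ hs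

lemma IsDef.and' {γ : Type} {P Q : (γ → ℝ) → Prop} (hP : IsDef L {z | P z})
    (hQ : IsDef L {z | Q z}) : IsDef L {z | P z ∧ Q z} := hP.inter hQ

lemma IsDef.or' {γ : Type} {P Q : (γ → ℝ) → Prop} (hP : IsDef L {z | P z})
    (hQ : IsDef L {z | Q z}) : IsDef L {z | P z ∨ Q z} := hP.union hQ

lemma IsDef.not' {γ : Type} {P : (γ → ℝ) → Prop} (hP : IsDef L {z | P z}) :
    IsDef L {z | ¬ P z} := hP.compl

lemma IsDef.imp' {γ : Type} {P Q : (γ → ℝ) → Prop} (hP : IsDef L {z | P z})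
    (hQ : IsDef L {z | Q z}) : IsDef L {z | P z → Q z} := by
  have : {z : γ → ℝ | P z → Q z} = {z | ¬ P z} ∪ {z | Q z} := by
    ext z; simp [imp_iff_not_or]
  rw [this]; exact hP.compl.union hQ

lemma isDef_exists_s18 {α : Type} [Finite α] {P : (α → ℝ) → ℝ → Prop}
    (h : IsDef L {w : α ⊕ Unit → ℝ | P (fun i => w (Sum.inl i)) (w (Sum.inr ()))}) :
    IsDef L {z : α → ℝ | ∃ t, P z t} := by
  have him := Set.Definable.image_comp h Sum.inl
  have : ((fun g : (α ⊕ Unit) → ℝ => g ∘ Sum.inl) ''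
      {w : α ⊕ Unit → ℝ | P (fun i => w (Sum.inl i)) (w (Sum.inr ()))})
      = {z : α → ℝ | ∃ t, P z t} := by
    ext z
    constructor
    · rintro ⟨w, hw, rfl⟩
      exact ⟨w (Sum.inr ()), hw⟩
    · rintro ⟨t, ht⟩
      exact ⟨Sum.elim z (fun _ => t), ht, rfl⟩
  rwa [this] at him

lemma isDef_forall_s18 {α : Type} [Finite α] {P : (α → ℝ) → ℝ → Prop}
    (h : IsDef L {w : α ⊕ Unit → ℝ | P (fun i => w (Sum.inl i)) (w (Sum.inr ()))}) :
    IsDef L {z : α → ℝ | ∀ t, P z t} := by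
  have := (isDef_exists_s18 (P := fun z t => ¬ P z t) h.compl).compl
  have he : {z : α → ℝ | ∃ t, ¬ P z t}ᶜ = {z | ∀ t, P z t} := by
    ext z; simp
  rwa [he] at this

section Atoms
variable (hE : ExpandsOrderedField L)
include hE

lemma isDef_lt {γ : Type} (i j : γ) : IsDef L {z : γ → ℝ | z i < z j} := by
  have := isDef_preimage (σ := (![i, j] : Fin 2 → γ)) hE.1
  apply isDef_congr _ this
  ext z; simp [Matrix.cons_val_zero, Matrix.cons_val_one]

lemma isDef_le {γ : Type} (i j : γ) : IsDef L {z : γ → ℝ | z i ≤ z j} := by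
  have := (isDef_lt hE j i).not'
  apply isDef_congr _ this
  ext z; simp

lemma isDef_eq {γ : Type} (i j : γ) : IsDef L {z : γ → ℝ | z i = z j} := by
  have := (isDef_le hE i j).and' (isDef_le hE j i)
  apply isDef_congr _ this
  ext z; simp [le_antisymm_iff]

lemma isDef_addEq {γ : Type} (i j k : γ) : IsDef L {z : γ → ℝ | z i = z j + z k} := by
  have := isDef_preimage (σ := (![j, k, i] : Fin 3 → γ)) hE.2.1
  apply isDef_congr _ this
  ext z; simp

lemma isDef_mulEq {γ : Type} (i j k : γ) : IsDef L {z : γ → ℝ | z i = z j * z k} := by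
  have := isDef_preimage (σ := (![j, k, i] : Fin 3 → γ)) hE.2.2
  apply isDef_congr _ this
  ext z; simp

lemma isDef_zero {γ : Type} (i : γ) : IsDef L {z : γ → ℝ | z i = 0} := by
  have := isDef_addEq hE i i i
  apply isDef_congr _ this
  ext z; constructor
  · intro h; simpa using h.symm
  · intro h; simp only [mem_setOf_eq] at h ⊢; linarith [h]

lemma isDef_one {γ : Type} (i : γ) : IsDef L {z : γ → ℝ | z i = 1} := by
  have := (isDef_mulEq hE i i i).and' ((isDef_zero hE i).not')
  apply isDef_congr _ this
  ext z; simp only [mem_setOf_eq]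
  constructor
  · rintro ⟨h1, h2⟩
    have : z i * 1 = z i * z i := by linarith [h1]
    exact (mul_left_cancel₀ h2 this).symm
  · intro h; rw [h]; norm_num
end Atoms

section Atoms2
variable (hE : ExpandsOrderedField L)
include hE

lemma isDef_pos {γ : Type} [Finite γ] (i : γ) : IsDef L {z : γ → ℝ | 0 < z i} := by
  have h1 : IsDef L {w : γ ⊕ Unit → ℝ | w (Sum.inr ()) = 0 ∧ w (Sum.inr ()) < w (Sum.inl i)} :=
    (isDef_zero hE _).and' (isDef_lt hE _ _)
  have := isDef_exists_s18 (P := fun z t => t = 0 ∧ t < z i) h1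
  apply isDef_congr _ this
  ext z; constructor
  · rintro ⟨t, rfl, ht⟩; exact ht
  · intro h; exact ⟨0, rfl, h⟩

lemma isDef_nonneg {γ : Type} [Finite γ] (i : γ) : IsDef L {z : γ → ℝ | 0 ≤ z i} := by
  have h1 : IsDef L {w : γ ⊕ Unit → ℝ | w (Sum.inr ()) = 0 ∧ w (Sum.inr ()) ≤ w (Sum.inl i)} :=
    (isDef_zero hE _).and' (isDef_le hE _ _)
  have := isDef_exists_s18 (P := fun z t => t = 0 ∧ t ≤ z i) h1
  apply isDef_congr _ this
  ext z; constructor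
  · rintro ⟨t, rfl, ht⟩; exact ht
  · intro h; exact ⟨0, rfl, h⟩

lemma isDef_nonpos {γ : Type} [Finite γ] (i : γ) : IsDef L {z : γ → ℝ | z i ≤ 0} := by
  have h1 : IsDef L {w : γ ⊕ Unit → ℝ | w (Sum.inr ()) = 0 ∧ w (Sum.inl i) ≤ w (Sum.inr ())} :=
    (isDef_zero hE _).and' (isDef_le hE _ _)
  have := isDef_exists_s18 (P := fun z t => t = 0 ∧ z i ≤ t) h1
  apply isDef_congr _ this
  ext z; constructor
  · rintro ⟨t, rfl, ht⟩; exact ht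
  · intro h; exact ⟨0, rfl, h⟩

lemma isDef_leOne {γ : Type} [Finite γ] (i : γ) : IsDef L {z : γ → ℝ | z i ≤ 1} := by
  have h1 : IsDef L {w : γ ⊕ Unit → ℝ | w (Sum.inr ()) = 1 ∧ w (Sum.inl i) ≤ w (Sum.inr ())} :=
    (isDef_one hE _).and' (isDef_le hE _ _)
  have := isDef_exists_s18 (P := fun z t => t = 1 ∧ z i ≤ t) h1
  apply isDef_congr _ this
  ext z; constructor
  · rintro ⟨t, rfl, ht⟩; exact ht
  · intro h; exact ⟨1, rfl, h⟩

lemma isDef_addNonneg {γ : Type} [Finite γ] (i j : γ) :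
    IsDef L {z : γ → ℝ | 0 ≤ z i + z j} := by
  have h1 : IsDef L {w : γ ⊕ Unit → ℝ |
      w (Sum.inr ()) = w (Sum.inl i) + w (Sum.inl j) ∧ 0 ≤ w (Sum.inr ())} :=
    (isDef_addEq hE _ _ _).and' (isDef_nonneg hE _)
  have := isDef_exists_s18 (P := fun z t => t = z i + z j ∧ 0 ≤ t) h1
  apply isDef_congr _ this
  ext z; constructor
  · rintro ⟨t, rfl, ht⟩; exact ht
  · intro h; exact ⟨_, rfl, h⟩

lemma isDef_addNonpos {γ : Type} [Finite γ] (i j : γ) :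
    IsDef L {z : γ → ℝ | z i + z j ≤ 0} := by
  have h1 : IsDef L {w : γ ⊕ Unit → ℝ |
      w (Sum.inr ()) = w (Sum.inl i) + w (Sum.inl j) ∧ w (Sum.inr ()) ≤ 0} :=
    (isDef_addEq hE _ _ _).and' (isDef_nonpos hE _)
  have := isDef_exists_s18 (P := fun z t => t = z i + z j ∧ t ≤ 0) h1
  apply isDef_congr _ this
  ext z; constructor
  · rintro ⟨t, rfl, ht⟩; exact ht
  · intro h; exact ⟨_, rfl, h⟩

lemma isDef_ltAdd {γ : Type} [Finite γ] (i j k : γ) :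
    IsDef L {z : γ → ℝ | z i < z j + z k} := by
  have h1 : IsDef L {w : γ ⊕ Unit → ℝ |
      w (Sum.inr ()) = w (Sum.inl j) + w (Sum.inl k) ∧ w (Sum.inl i) < w (Sum.inr ())} :=
    (isDef_addEq hE _ _ _).and' (isDef_lt hE _ _)
  have := isDef_exists_s18 (P := fun z t => t = z j + z k ∧ z i < t) h1
  apply isDef_congr _ this
  ext z; constructor
  · rintro ⟨t, rfl, ht⟩; exact ht
  · intro h; exact ⟨_, rfl, h⟩

lemma isDef_eqAddOne {γ : Type} [Finite γ] (i j : γ) :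
    IsDef L {z : γ → ℝ | z i = z j + 1} := by
  have h1 : IsDef L {w : γ ⊕ Unit → ℝ |
      w (Sum.inr ()) = 1 ∧ w (Sum.inl i) = w (Sum.inl j) + w (Sum.inr ())} :=
    (isDef_one hE _).and' (isDef_addEq hE _ _ _)
  have := isDef_exists_s18 (P := fun z t => t = 1 ∧ z i = z j + t) h1
  apply isDef_congr _ this
  ext z; constructor
  · rintro ⟨t, rfl, ht⟩; exact ht
  · intro h; exact ⟨1, rfl, h⟩

end Atoms2

lemma isDef_memS {k : ℕ} {γ : Type} {S : Set ((Fin k ⊕ Unit) → ℝ)} (hS : IsDef L S)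
    (σ : Fin k → γ) (ix : γ) :
    IsDef L {z : γ → ℝ | Sum.elim (fun i => z (σ i)) (fun _ => z ix) ∈ S} := by
  have := isDef_preimage (σ := Sum.elim σ (fun _ : Unit => ix)) hS
  apply isDef_congr _ this
  ext z
  have : (fun i' => z (Sum.elim σ (fun _ : Unit => ix) i'))
      = Sum.elim (fun i => z (σ i)) (fun _ => z ix) := by
    funext i'; cases i' <;> rfl
  simp only [mem_setOf_eq, this]



/-! ### Formula components -/

def lbA (P : ℝ → Prop) (b : ℝ) : Prop :=
  ∀ x, P x → (0 ≤ x → b ≤ x) ∧ (x ≤ 0 → b + x ≤ 0)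

def GLBabs (P : ℝ → Prop) (d : ℝ) : Prop := lbA P d ∧ ∀ b, lbA P b → b ≤ d

def InB (P : ℝ → Prop) (c x : ℝ) : Prop := P x ∧ 0 ≤ x + c ∧ x ≤ c

def NoPts (P : ℝ → Prop) (c x r : ℝ) : Prop :=
  ∀ y, (x < y + r ∧ y < x) → ¬ InB P c y

def InR1 (P : ℝ → Prop) (c r : ℝ) : Prop :=
  0 < r ∧ r ≤ 1 ∧ ∃ x, InB P c x ∧ NoPts P c x r

def InA1 (P : ℝ → Prop) (c r1 x : ℝ) : Prop := InB P c x ∧ NoPts P c x r1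

def FullI (P : ℝ → Prop) (c x r : ℝ) : Prop :=
  ∀ y, (x < y ∧ y < x + r) → InB P c y

def InR2 (P : ℝ → Prop) (c r : ℝ) : Prop := 0 < r ∧ r ≤ 1 ∧ ∃ x, FullI P c x r

def lbS (Q : ℝ → Prop) (b : ℝ) : Prop := ∀ x, Q x → b ≤ x

def isGLBf (Q : ℝ → Prop) (m : ℝ) : Prop := lbS Q m ∧ ∀ b, lbS Q b → b ≤ m

def ubS (Q : ℝ → Prop) (b : ℝ) : Prop := ∀ x, Q x → x ≤ b

def isLUBf (Q : ℝ → Prop) (m : ℝ) : Prop := ubS Q m ∧ ∀ b, ubS Q b → m ≤ b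

def Phi (P : ℝ → Prop) (t : ℝ) : Prop :=
  ∃ d, ∃ c, GLBabs P d ∧ c = d + 1 ∧
    (((∃ r, InR1 P c r) ∧ ∃ s1, ∃ r1, isLUBf (InR1 P c) s1 ∧ s1 = r1 + r1 ∧
        isGLBf (InA1 P c r1) t)
     ∨ (¬ (∃ r, InR1 P c r) ∧ ∃ s2, ∃ r2, ∃ xs, ∃ q, isLUBf (InR2 P c) s2 ∧ s2 = r2 + r2 ∧
        isGLBf (fun x => FullI P c x r2) xs ∧ r2 = q + q ∧ t = xs + q))

/-! ### Bridges to order-theoretic notions -/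

lemma lbS_iff (Q : ℝ → Prop) (b : ℝ) : lbS Q b ↔ b ∈ lowerBounds {x | Q x} := by
  simp [lbS, lowerBounds]

lemma ubS_iff (Q : ℝ → Prop) (b : ℝ) : ubS Q b ↔ b ∈ upperBounds {x | Q x} := by
  simp [ubS, upperBounds]

lemma isGLBf_iff (Q : ℝ → Prop) (m : ℝ) : isGLBf Q m ↔ IsGLB {x | Q x} m := by
  simp only [isGLBf, IsGLB, lbS_iff]
  constructor
  · rintro ⟨h1, h2⟩
    exact ⟨h1, fun b hb => h2 b ((lbS_iff Q b).2 hb)⟩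
  · rintro ⟨h1, h2⟩
    exact ⟨h1, fun b hb => h2 ((lbS_iff Q b).1 hb)⟩

lemma isLUBf_iff (Q : ℝ → Prop) (m : ℝ) : isLUBf Q m ↔ IsLUB {x | Q x} m := by
  simp only [isLUBf, IsLUB, ubS_iff]
  constructor
  · rintro ⟨h1, h2⟩
    exact ⟨h1, fun b hb => h2 b ((ubS_iff Q b).2 hb)⟩
  · rintro ⟨h1, h2⟩
    exact ⟨h1, fun b hb => h2 ((ubS_iff Q b).1 hb)⟩

lemma lbA_iff (A : Set ℝ) (b : ℝ) :
    lbA (· ∈ A) b ↔ b ∈ lowerBounds ((fun x => |x|) '' A) := by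
  constructor
  · rintro h v ⟨x, hx, rfl⟩
    show b ≤ |x|
    rcases le_total 0 x with h0 | h0
    · rw [abs_of_nonneg h0]; exact (h x hx).1 h0
    · rw [abs_of_nonpos h0]; linarith [(h x hx).2 h0]
  · intro h x hx
    have hb : b ≤ |x| := h ⟨x, hx, rfl⟩
    constructor
    · intro h0; rwa [abs_of_nonneg h0] at hb
    · intro h0; rw [abs_of_nonpos h0] at hb; linarith

lemma GLBabs_iff (A : Set ℝ) (d : ℝ) :
    GLBabs (· ∈ A) d ↔ IsGLB ((fun x => |x|) '' A) d := by
  simp only [GLBabs, IsGLB, lbA_iff]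
  constructor
  · rintro ⟨h1, h2⟩
    exact ⟨h1, fun b hb => h2 b hb⟩
  · rintro ⟨h1, h2⟩
    exact ⟨h1, fun b hb => h2 hb⟩

lemma not_isGLB_empty (m : ℝ) : ¬ IsGLB (∅ : Set ℝ) m := by
  intro h
  have := h.2 (fun x hx => absurd hx (notMem_empty x) : (m + 1) ∈ lowerBounds (∅ : Set ℝ))
  · linarith

lemma not_isLUB_empty (m : ℝ) : ¬ IsLUB (∅ : Set ℝ) m := by
  intro h
  have := h.2 (fun x hx => absurd hx (notMem_empty x) : (m - 1) ∈ upperBounds (∅ : Set ℝ))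
  · linarith

/-! ### The canonical choice -/

def dd (A : Set ℝ) : ℝ := sInf ((fun x => |x|) '' A)
def cc (A : Set ℝ) : ℝ := dd A + 1
def BBs (A : Set ℝ) : Set ℝ := {x | InB (· ∈ A) (cc A) x}
def R1s (A : Set ℝ) : Set ℝ := {r | InR1 (· ∈ A) (cc A) r}
def s1v (A : Set ℝ) : ℝ := sSup (R1s A)
def A1s (A : Set ℝ) : Set ℝ := {x | InA1 (· ∈ A) (cc A) (s1v A / 2) x}
def muv (A : Set ℝ) : ℝ := sInf (A1s A)
def R2s (A : Set ℝ) : Set ℝ := {r | InR2 (· ∈ A) (cc A) r}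
def s2v (A : Set ℝ) : ℝ := sSup (R2s A)
def X2s (A : Set ℝ) : Set ℝ := {x | FullI (· ∈ A) (cc A) x (s2v A / 2)}
def xsv (A : Set ℝ) : ℝ := sInf (X2s A)
def eC (A : Set ℝ) : ℝ := if (R1s A).Nonempty then muv A else xsv A + s2v A / 4

/-! ### Scattered sets -/

def Scattered (s : Set ℝ) : Prop :=
  ∀ C ⊆ s, C.Nonempty → ∃ x ∈ C, ∃ ε > 0, ∀ y ∈ C, |y - x| < ε → y = x

lemma IsDiscreteSet.scattered {D : Set ℝ} (hD : IsDiscreteSet D) : Scattered D := by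
  intro C hC ⟨x, hx⟩
  obtain ⟨U, hU, hUD⟩ := hD x (hC hx)
  have hxU : x ∈ U := by
    have : x ∈ U ∩ D := hUD ▸ rfl
    exact this.1
  obtain ⟨ε, hε, hball⟩ := Metric.isOpen_iff.1 hU x hxU
  refine ⟨x, hx, ε, hε, fun y hy hyx => ?_⟩
  have : y ∈ U ∩ D := ⟨hball (by rwa [Metric.mem_ball, Real.dist_eq]), hC hy⟩
  rw [hUD] at this
  exact this

lemma Scattered.union {S T : Set ℝ} (hS : Scattered S) (hT : Scattered T) :
    Scattered (S ∪ T) := by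
  intro C hC hne
  by_contra hcon
  push_neg at hcon
  -- hcon : ∀ x ∈ C, ∀ ε > 0, ∃ y ∈ C, |y - x| < ε ∧ y ≠ x
  have hdense : ∀ x ∈ C, ∀ ε > 0, ∃ y, y ∈ C ∩ T ∧ |y - x| < ε := by
    intro x hx ε hε
    by_contra hno
    push_neg at hno
    set C' := {y ∈ C | |y - x| < ε} with hC'
    have hC'S : C' ⊆ S := by
      rintro y ⟨hyC, hyε⟩
      rcases hC hyC with h | h
      · exact h
      · exact absurd hyε (not_lt.2 (hno y ⟨hyC, h⟩))
    have hC'ne : C'.Nonempty := ⟨x, hx, by simp [hε]⟩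
    obtain ⟨y, hyC', δ, hδ, hiso⟩ := hS C' hC'S hC'ne
    have hεy : 0 < ε - |y - x| := by
      have := hyC'.2
      linarith
    obtain ⟨z, hzC, hzd, hzy⟩ := hcon y hyC'.1 (min δ (ε - |y - x|)) (lt_min hδ hεy)
    have hzC' : z ∈ C' := by
      refine ⟨hzC, ?_⟩
      have h1 : |z - y| < ε - |y - x| := lt_of_lt_of_le hzd (min_le_right _ _)
      calc |z - x| ≤ |z - y| + |y - x| := abs_sub_le z y x
        _ < ε := by linarith
    exact hzy (hiso z hzC' (lt_of_lt_of_le hzd (min_le_left _ _)))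
  obtain ⟨x0, hx0⟩ := hne
  have hCTne : (C ∩ T).Nonempty := by
    obtain ⟨y, hy, -⟩ := hdense x0 hx0 1 one_pos
    exact ⟨y, hy⟩
  obtain ⟨y, hy, ε, hε, hiso⟩ := hT (C ∩ T) inter_subset_right hCTne
  obtain ⟨z, hzC, hzd, hzy⟩ := hcon y hy.1 (ε / 2) (by linarith)
  have hzyabs : 0 < |z - y| := abs_pos.2 (sub_ne_zero.2 hzy)
  obtain ⟨w, hw, hwz⟩ := hdense z hzC (min (|z - y|) (ε / 2)) (lt_min hzyabs (by linarith))
  have hw1 : |w - y| < ε := by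
    have h1 : |w - z| < ε / 2 := lt_of_lt_of_le hwz (min_le_right _ _)
    calc |w - y| ≤ |w - z| + |z - y| := abs_sub_le w z y
      _ < ε := by
        have := lt_of_lt_of_le hzd (le_refl _)
        linarith
  have hwy : w ≠ y := by
    intro h
    subst h
    have h2 : |w - z| < |z - w| := lt_of_lt_of_le hwz (min_le_left _ _)
    rw [abs_sub_comm w z] at h2
    exact lt_irrefl _ h2
  exact hwy (hiso w hw hw1)

lemma scattered_iUnion_fin : ∀ (N : ℕ) (D : Fin N → Set ℝ),
    (∀ i, IsDiscreteSet (D i)) → Scattered (⋃ i, D i) := by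
  intro N
  induction N with
  | zero =>
    intro D _
    intro C hC hne
    obtain ⟨x, hx⟩ := hne
    exact absurd (hC hx) (by simp)
  | succ n ih =>
    intro D hD
    have hsplit : (⋃ i, D i) = (⋃ i : Fin n, D i.castSucc) ∪ D (Fin.last n) := by
      ext x
      simp only [mem_iUnion, mem_union]
      constructor
      · rintro ⟨i, hi⟩
        rcases Fin.eq_castSucc_or_eq_last i with ⟨j, rfl⟩ | rfl
        · exact Or.inl ⟨j, hi⟩
        · exact Or.inr hi
      · rintro (⟨i, hi⟩ | hi)
        · exact ⟨i.castSucc, hi⟩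
        · exact ⟨Fin.last n, hi⟩
    rw [hsplit]
    exact (ih _ (fun i => hD i.castSucc)).union (hD (Fin.last n)).scattered

/-! ### Basic facts -/

lemma absImage_nonempty {A : Set ℝ} (hA : A.Nonempty) : ((fun x => |x|) '' A).Nonempty :=
  hA.image _

lemma absImage_bddBelow (A : Set ℝ) : BddBelow ((fun x => |x|) '' A) := by
  refine ⟨0, ?_⟩
  rintro v ⟨x, -, rfl⟩
  exact abs_nonneg x

lemma dd_nonneg {A : Set ℝ} (hA : A.Nonempty) : 0 ≤ dd A :=
  le_csInf (absImage_nonempty hA) (by rintro v ⟨x, -, rfl⟩; exact abs_nonneg x)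

lemma cc_pos {A : Set ℝ} (hA : A.Nonempty) : 0 < cc A := by
  have := dd_nonneg hA; unfold cc; linarith

lemma BBs_subset (A : Set ℝ) : BBs A ⊆ A := fun x hx => hx.1

lemma BBs_nonempty {A : Set ℝ} (hA : A.Nonempty) : (BBs A).Nonempty := by
  obtain ⟨v, ⟨x, hx, rfl⟩, hv⟩ :=
    exists_lt_of_csInf_lt (absImage_nonempty hA) (show dd A < dd A + 1 by linarith)
  have habs : |x| < cc A := hv
  rcases abs_lt.1 habs with ⟨h1, h2⟩
  exact ⟨x, hx, by linarith, by linarith⟩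

lemma R1s_bddAbove (A : Set ℝ) : BddAbove (R1s A) := ⟨1, fun r hr => hr.2.1⟩

lemma R2s_bddAbove (A : Set ℝ) : BddAbove (R2s A) := ⟨1, fun r hr => hr.2.1⟩

lemma A1s_subset (A : Set ℝ) : A1s A ⊆ BBs A := fun x hx => hx.1

lemma A1s_bddBelow (A : Set ℝ) : BddBelow (A1s A) := by
  refine ⟨-(cc A), fun x hx => ?_⟩
  have := hx.1.2.1
  linarith

/-! ### Case 1 -/

lemma case1_facts {A : Set ℝ} (h1 : (R1s A).Nonempty) :
    (A1s A).Nonempty ∧ muv A ∈ A1s A := by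
  obtain ⟨r, hr⟩ := h1
  have hs1pos : 0 < s1v A := lt_of_lt_of_le hr.1 (le_csSup (R1s_bddAbove A) hr)
  have hr1lt : s1v A / 2 < s1v A := by linarith
  obtain ⟨r', hr', hgt⟩ := exists_lt_of_lt_csSup ⟨r, hr⟩ hr1lt
  obtain ⟨x, hxB, hxno⟩ := hr'.2.2
  have hxA1 : x ∈ A1s A := by
    refine ⟨hxB, fun y hy => hxno y ⟨by linarith [hy.1], hy.2⟩⟩
  have hne : (A1s A).Nonempty := ⟨x, hxA1⟩
  refine ⟨hne, ?_⟩
  have hsep : ∀ u ∈ A1s A, ∀ v ∈ A1s A, u < v → s1v A / 2 ≤ v - u := by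
    intro u hu v hv huv
    by_contra hcon
    push_neg at hcon
    exact (hv.2 u ⟨by linarith, huv⟩) hu.1
  have hr1pos : 0 < s1v A / 2 := by linarith
  obtain ⟨y, hyA1, hylt⟩ := exists_lt_of_csInf_lt hne
    (show sInf (A1s A) < sInf (A1s A) + s1v A / 4 by linarith)
  rcases eq_or_lt_of_le (csInf_le (A1s_bddBelow A) hyA1) with heq | hlt
  · show sInf (A1s A) ∈ A1s A
    rw [heq]; exact hyA1
  · obtain ⟨y', hy'A1, hy'lt⟩ := exists_lt_of_csInf_lt hne hlt
    have h2 := hsep y' hy'A1 y hyA1 hy'lt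
    have h3 := csInf_le (A1s_bddBelow A) hy'A1
    have : sInf (A1s A) + s1v A / 4 ≤ sInf (A1s A) := by linarith
    linarith

lemma muv_mem {A : Set ℝ} (h1 : (R1s A).Nonempty) : muv A ∈ A :=
  BBs_subset A (A1s_subset A (case1_facts h1).2)

/-! ### Case 2 -/

lemma case2_facts {A : Set ℝ} (hA : A.Nonempty) {N : ℕ} {U : Set ℝ} {D : Fin N → Set ℝ}
    (hU : IsOpen U) (hD : ∀ i, IsDiscreteSet (D i)) (hAUD : A = U ∪ ⋃ i, D i)
    (hnot : ¬ (R1s A).Nonempty) :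
    (R2s A).Nonempty ∧ (X2s A).Nonempty ∧ BddBelow (X2s A) ∧ xsv A + s2v A / 4 ∈ BBs A := by
  have hcc := cc_pos hA
  -- B has no isolated points
  have hcrowd : ∀ x ∈ BBs A, ∀ ε > 0, ∃ y ∈ BBs A, |y - x| < ε ∧ y ≠ x := by
    intro x hx ε hε
    by_contra hcon
    push_neg at hcon
    apply hnot
    refine ⟨min ε 1, lt_min hε one_pos, min_le_right _ _, x, hx, ?_⟩
    intro y hy hyB
    have h1 : |y - x| < ε := by
      have ha := hy.1
      have hb := hy.2
      have : x - y < min ε 1 := by linarith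
      have h2 : x - y < ε := lt_of_lt_of_le this (min_le_left _ _)
      rw [abs_sub_lt_iff]
      constructor <;> linarith
    exact absurd (hcon y hyB h1) (by simpa using (ne_of_lt hy.2))
  -- a point of B in U
  have hBU : ∃ x, x ∈ BBs A ∧ x ∈ U := by
    by_contra hcon
    push_neg at hcon
    have hsub : BBs A ⊆ ⋃ i, D i := by
      intro x hx
      have hxA : x ∈ A := hx.1
      rw [hAUD] at hxA
      rcases hxA with h | h
      · exact absurd h (hcon x hx)
      · exact h
    obtain ⟨x, hx, ε, hε, hiso⟩ :=
      scattered_iUnion_fin N D hD (BBs A) hsub (BBs_nonempty hA)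
    obtain ⟨y, hy, hyd, hyx⟩ := hcrowd x hx ε hε
    exact hyx (hiso y hy hyd)
  obtain ⟨x, hxB, hxU⟩ := hBU
  obtain ⟨ε, hε, hball⟩ := Metric.isOpen_iff.1 hU x hxU
  have hxcc1 : 0 ≤ x + cc A := hxB.2.1
  have hxcc2 : x ≤ cc A := hxB.2.2
  set lo := max (-(cc A)) (x - ε) with hlo
  set hi := min (cc A) (x + ε) with hhi
  have hlohi : lo < hi := by
    apply max_lt <;> apply lt_min <;> [skip; skip; skip; skip] <;> first | linarith | linarith
  have hIoo : Ioo lo hi ⊆ BBs A := by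
    intro y hy
    have h1 : x - ε < y := lt_of_le_of_lt (le_max_right _ _) hy.1
    have h2 : y < x + ε := lt_of_lt_of_le hy.2 (min_le_right _ _)
    have h3 : -(cc A) < y := lt_of_le_of_lt (le_max_left _ _) hy.1
    have h4 : y < cc A := lt_of_lt_of_le hy.2 (min_le_left _ _)
    have hyU : y ∈ U := hball (by rw [Metric.mem_ball, Real.dist_eq, abs_sub_lt_iff]; constructor <;> linarith)
    exact ⟨hAUD ▸ Or.inl hyU, by linarith, by linarith⟩
  -- R2 nonempty
  have hR2ne : (R2s A).Nonempty := by
    refine ⟨min (hi - lo) 1, lt_min (by linarith) one_pos, min_le_right _ _, lo, ?_⟩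
    intro y hy
    have h2 : y < lo + (hi - lo) := lt_of_lt_of_le hy.2 (by have := min_le_left (hi - lo) 1; linarith)
    exact hIoo ⟨hy.1, by linarith⟩
  have hs2pos : 0 < s2v A := by
    obtain ⟨r, hr⟩ := hR2ne
    exact lt_of_lt_of_le hr.1 (le_csSup (R2s_bddAbove A) hr)
  have hs2le1 : s2v A ≤ 1 := csSup_le hR2ne (fun r hr => hr.2.1)
  -- X2 nonempty
  have hX2ne : (X2s A).Nonempty := by
    obtain ⟨r', hr', hgt⟩ := exists_lt_of_lt_csSup hR2ne (show s2v A / 2 < s2v A by linarith)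
    obtain ⟨x0, hx0⟩ := hr'.2.2
    exact ⟨x0, fun y hy => hx0 y ⟨hy.1, by linarith [hy.2]⟩⟩
  have hX2bdd : BddBelow (X2s A) := by
    refine ⟨-(cc A) - 1, fun u hu => ?_⟩
    have hy : u + s2v A / 4 ∈ BBs A := hu (u + s2v A / 4) ⟨by linarith, by linarith⟩
    have := hy.2.1
    linarith
  refine ⟨hR2ne, hX2ne, hX2bdd, ?_⟩
  obtain ⟨u, huX2, hult⟩ := exists_lt_of_csInf_lt hX2ne
    (show sInf (X2s A) < xsv A + s2v A / 4 by unfold xsv; linarith)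
  have hule : xsv A ≤ u := csInf_le hX2bdd huX2
  exact huX2 (xsv A + s2v A / 4) ⟨hult, by linarith⟩

lemma eC_mem {A : Set ℝ} (hA : A.Nonempty) {N : ℕ} {U : Set ℝ} {D : Fin N → Set ℝ}
    (hU : IsOpen U) (hD : ∀ i, IsDiscreteSet (D i)) (hAUD : A = U ∪ ⋃ i, D i) :
    eC A ∈ A := by
  by_cases hc1 : (R1s A).Nonempty
  · unfold eC; rw [if_pos hc1]; exact muv_mem hc1
  · unfold eC; rw [if_neg hc1]
    exact BBs_subset A (case2_facts hA hU hD hAUD hc1).2.2.2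

lemma phi_iff {A : Set ℝ} {N : ℕ} {U : Set ℝ} {D : Fin N → Set ℝ}
    (hU : IsOpen U) (hD : ∀ i, IsDiscreteSet (D i)) (hAUD : A = U ∪ ⋃ i, D i) (t : ℝ) :
    Phi (· ∈ A) t ↔ (A.Nonempty ∧ t = eC A) := by
  constructor
  · rintro ⟨d, c, hglb, hc, hcase⟩
    subst hc
    have hAne : A.Nonempty := by
      by_contra hne
      rw [not_nonempty_iff_eq_empty] at hne
      subst hne
      have h2 := hglb.2 (d + 1) (fun x hx => absurd hx (notMem_empty x))
      linarith
    have hd : d = dd A :=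
      (((GLBabs_iff A d).1 hglb).csInf_eq (absImage_nonempty hAne)).symm
    subst hd
    rcases hcase with ⟨hc1, s1, r1, hlub, hsum, hglbt⟩ |
      ⟨hnot, s2, r2, xs, q, hlub, hsum, hglbx, hq, ht⟩
    · have hc1' : (R1s A).Nonempty := hc1
      have hlub' : IsLUB (R1s A) s1 := (isLUBf_iff _ _).1 hlub
      have hs1 : s1 = s1v A := (hlub'.csSup_eq hc1').symm
      have hr1 : r1 = s1v A / 2 := by rw [hs1] at hsum; linarith
      subst hr1
      have hglbt' : IsGLB (A1s A) t := (isGLBf_iff _ _).1 hglbt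
      have ht : t = muv A := (hglbt'.csInf_eq (case1_facts hc1').1).symm
      refine ⟨hAne, ?_⟩
      rw [ht]; unfold eC; rw [if_pos hc1']
    · have hnot' : ¬ (R1s A).Nonempty := hnot
      have hlub' : IsLUB (R2s A) s2 := (isLUBf_iff _ _).1 hlub
      have hR2ne : (R2s A).Nonempty := by
        by_contra h
        rw [not_nonempty_iff_eq_empty] at h
        rw [h] at hlub'
        exact not_isLUB_empty s2 hlub'
      have hs2 : s2 = s2v A := (hlub'.csSup_eq hR2ne).symm
      have hr2 : r2 = s2v A / 2 := by rw [hs2] at hsum; linarith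
      subst hr2
      have hglbx' : IsGLB (X2s A) xs := (isGLBf_iff _ _).1 hglbx
      have hX2ne : (X2s A).Nonempty := by
        by_contra h
        rw [not_nonempty_iff_eq_empty] at h
        rw [h] at hglbx'
        exact not_isGLB_empty xs hglbx'
      have hxs : xs = xsv A := (hglbx'.csInf_eq hX2ne).symm
      have hqv : q = s2v A / 4 := by linarith [hq]
      refine ⟨hAne, ?_⟩
      rw [ht, hxs, hqv]; unfold eC; rw [if_neg hnot']
  · rintro ⟨hAne, rfl⟩
    refine ⟨dd A, cc A,
      (GLBabs_iff A _).2 (isGLB_csInf (absImage_nonempty hAne) (absImage_bddBelow A)),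
      rfl, ?_⟩
    by_cases hc1 : (R1s A).Nonempty
    · left
      refine ⟨hc1, s1v A, s1v A / 2,
        (isLUBf_iff _ _).2 (isLUB_csSup hc1 (R1s_bddAbove A)), by ring, ?_⟩
      have hglb : IsGLB (A1s A) (muv A) := isGLB_csInf (case1_facts hc1).1 (A1s_bddBelow A)
      have heq : eC A = muv A := by unfold eC; rw [if_pos hc1]
      rw [heq]
      exact (isGLBf_iff _ _).2 hglb
    · right
      obtain ⟨hR2ne, hX2ne, hX2bdd, hmem⟩ := case2_facts hAne hU hD hAUD hc1
      refine ⟨hc1, s2v A, s2v A / 2, xsv A, s2v A / 4,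
        (isLUBf_iff _ _).2 (isLUB_csSup hR2ne (R2s_bddAbove A)), by ring,
        (isGLBf_iff _ _).2 (isGLB_csInf hX2ne hX2bdd), by ring, ?_⟩
      unfold eC; rw [if_neg hc1]


/-! ### Definability of the formula -/

def PZ {k : ℕ} (S : Set ((Fin k ⊕ Unit) → ℝ)) {γ : Type} (σ : Fin k → γ)
    (z : γ → ℝ) : ℝ → Prop :=
  fun u => Sum.elim (fun i => z (σ i)) (fun _ => u) ∈ S

section PhiDef
variable {k : ℕ} {S : Set ((Fin k ⊕ Unit) → ℝ)}
variable (hE : ExpandsOrderedField L) (hS : IsDef L S)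
include hE hS

lemma isDef_PZ {γ : Type} (σ : Fin k → γ) (ix : γ) :
    IsDef L {z : γ → ℝ | PZ S σ z (z ix)} :=
  isDef_memS hS σ ix

lemma isDef_InB {γ : Type} [Finite γ] (σ : Fin k → γ) (ic ix : γ) :
    IsDef L {z : γ → ℝ | InB (PZ S σ z) (z ic) (z ix)} :=
  (isDef_PZ hE hS σ ix).and' ((isDef_addNonneg hE ix ic).and' (isDef_le hE ix ic))

lemma isDef_NoPts {γ : Type} [Finite γ] (σ : Fin k → γ) (ic ix ir : γ) :
    IsDef L {z : γ → ℝ | NoPts (PZ S σ z) (z ic) (z ix) (z ir)} := by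
  apply isDef_forall_s18
  exact ((isDef_ltAdd hE (Sum.inl ix) (Sum.inr ()) (Sum.inl ir)).and'
      (isDef_lt hE (Sum.inr ()) (Sum.inl ix))).imp'
    (isDef_InB hE hS (fun i => Sum.inl (σ i)) (Sum.inl ic) (Sum.inr ())).not'

lemma isDef_FullI {γ : Type} [Finite γ] (σ : Fin k → γ) (ic ix ir : γ) :
    IsDef L {z : γ → ℝ | FullI (PZ S σ z) (z ic) (z ix) (z ir)} := by
  apply isDef_forall_s18
  exact ((isDef_lt hE (Sum.inl ix) (Sum.inr ())).and'
      (isDef_ltAdd hE (Sum.inr ()) (Sum.inl ix) (Sum.inl ir))).imp'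
    (isDef_InB hE hS (fun i => Sum.inl (σ i)) (Sum.inl ic) (Sum.inr ()))

lemma isDef_InA1 {γ : Type} [Finite γ] (σ : Fin k → γ) (ic ir ix : γ) :
    IsDef L {z : γ → ℝ | InA1 (PZ S σ z) (z ic) (z ir) (z ix)} :=
  (isDef_InB hE hS σ ic ix).and' (isDef_NoPts hE hS σ ic ix ir)

lemma isDef_InR1 {γ : Type} [Finite γ] (σ : Fin k → γ) (ic ir : γ) :
    IsDef L {z : γ → ℝ | InR1 (PZ S σ z) (z ic) (z ir)} := by
  refine (isDef_pos hE ir).and' ((isDef_leOne hE ir).and' ?_)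
  apply isDef_exists_s18
  exact (isDef_InB hE hS (fun i => Sum.inl (σ i)) (Sum.inl ic) (Sum.inr ())).and'
    (isDef_NoPts hE hS (fun i => Sum.inl (σ i)) (Sum.inl ic) (Sum.inr ()) (Sum.inl ir))

lemma isDef_InR2 {γ : Type} [Finite γ] (σ : Fin k → γ) (ic ir : γ) :
    IsDef L {z : γ → ℝ | InR2 (PZ S σ z) (z ic) (z ir)} := by
  refine (isDef_pos hE ir).and' ((isDef_leOne hE ir).and' ?_)
  apply isDef_exists_s18
  exact isDef_FullI hE hS (fun i => Sum.inl (σ i)) (Sum.inl ic) (Sum.inr ()) (Sum.inl ir)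

lemma isDef_lbA {γ : Type} [Finite γ] (σ : Fin k → γ) (ib : γ) :
    IsDef L {z : γ → ℝ | lbA (PZ S σ z) (z ib)} := by
  apply isDef_forall_s18
  exact (isDef_PZ hE hS (fun i => Sum.inl (σ i)) (Sum.inr ())).imp'
    (((isDef_nonneg hE (Sum.inr ())).imp' (isDef_le hE (Sum.inl ib) (Sum.inr ()))).and'
     ((isDef_nonpos hE (Sum.inr ())).imp' (isDef_addNonpos hE (Sum.inl ib) (Sum.inr ()))))

lemma isDef_GLBabs {γ : Type} [Finite γ] (σ : Fin k → γ) (id' : γ) :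
    IsDef L {z : γ → ℝ | GLBabs (PZ S σ z) (z id')} := by
  refine (isDef_lbA hE hS σ id').and' ?_
  apply isDef_forall_s18
  exact (isDef_lbA hE hS (fun i => Sum.inl (σ i)) (Sum.inr ())).imp'
    (isDef_le hE (Sum.inr ()) (Sum.inl id'))

lemma isDef_isLUBf_InR1 {γ : Type} [Finite γ] (σ : Fin k → γ) (ic im : γ) :
    IsDef L {z : γ → ℝ | isLUBf (InR1 (PZ S σ z) (z ic)) (z im)} := by
  have hub : ∀ (γ' : Type) [Finite γ'] (σ' : Fin k → γ') (ic' ib : γ'),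
      IsDef L {z : γ' → ℝ | ubS (InR1 (PZ S σ' z) (z ic')) (z ib)} := by
    intro γ' _ σ' ic' ib
    apply isDef_forall_s18
    exact (isDef_InR1 hE hS (fun i => Sum.inl (σ' i)) (Sum.inl ic') (Sum.inr ())).imp'
      (isDef_le hE (Sum.inr ()) (Sum.inl ib))
  exact (hub γ σ ic im).and' (isDef_forall_s18
    ((hub (γ ⊕ Unit) (fun i => Sum.inl (σ i)) (Sum.inl ic) (Sum.inr ())).imp'
      (isDef_le hE (Sum.inl im) (Sum.inr ()))))

lemma isDef_isLUBf_InR2 {γ : Type} [Finite γ] (σ : Fin k → γ) (ic im : γ) :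
    IsDef L {z : γ → ℝ | isLUBf (InR2 (PZ S σ z) (z ic)) (z im)} := by
  have hub : ∀ (γ' : Type) [Finite γ'] (σ' : Fin k → γ') (ic' ib : γ'),
      IsDef L {z : γ' → ℝ | ubS (InR2 (PZ S σ' z) (z ic')) (z ib)} := by
    intro γ' _ σ' ic' ib
    apply isDef_forall_s18
    exact (isDef_InR2 hE hS (fun i => Sum.inl (σ' i)) (Sum.inl ic') (Sum.inr ())).imp'
      (isDef_le hE (Sum.inr ()) (Sum.inl ib))
  exact (hub γ σ ic im).and' (isDef_forall_s18
    ((hub (γ ⊕ Unit) (fun i => Sum.inl (σ i)) (Sum.inl ic) (Sum.inr ())).imp'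
      (isDef_le hE (Sum.inl im) (Sum.inr ()))))

lemma isDef_isGLBf_InA1 {γ : Type} [Finite γ] (σ : Fin k → γ) (ic ir im : γ) :
    IsDef L {z : γ → ℝ | isGLBf (InA1 (PZ S σ z) (z ic) (z ir)) (z im)} := by
  have hlb : ∀ (γ' : Type) [Finite γ'] (σ' : Fin k → γ') (ic' ir' ib : γ'),
      IsDef L {z : γ' → ℝ | lbS (InA1 (PZ S σ' z) (z ic') (z ir')) (z ib)} := by
    intro γ' _ σ' ic' ir' ib
    apply isDef_forall_s18
    exact (isDef_InA1 hE hS (fun i => Sum.inl (σ' i)) (Sum.inl ic') (Sum.inl ir')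
      (Sum.inr ())).imp' (isDef_le hE (Sum.inl ib) (Sum.inr ()))
  exact (hlb γ σ ic ir im).and' (isDef_forall_s18
    ((hlb (γ ⊕ Unit) (fun i => Sum.inl (σ i)) (Sum.inl ic) (Sum.inl ir)
      (Sum.inr ())).imp' (isDef_le hE (Sum.inr ()) (Sum.inl im))))

lemma isDef_isGLBf_X2 {γ : Type} [Finite γ] (σ : Fin k → γ) (ic ir im : γ) :
    IsDef L {z : γ → ℝ | isGLBf (fun x => FullI (PZ S σ z) (z ic) x (z ir)) (z im)} := by
  have hlb : ∀ (γ' : Type) [Finite γ'] (σ' : Fin k → γ') (ic' ir' ib : γ'),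
      IsDef L {z : γ' → ℝ | lbS (fun x => FullI (PZ S σ' z) (z ic') x (z ir')) (z ib)} := by
    intro γ' _ σ' ic' ir' ib
    apply isDef_forall_s18
    exact (isDef_FullI hE hS (fun i => Sum.inl (σ' i)) (Sum.inl ic') (Sum.inr ())
      (Sum.inl ir')).imp' (isDef_le hE (Sum.inl ib) (Sum.inr ()))
  exact (hlb γ σ ic ir im).and' (isDef_forall_s18
    ((hlb (γ ⊕ Unit) (fun i => Sum.inl (σ i)) (Sum.inl ic) (Sum.inl ir)
      (Sum.inr ())).imp' (isDef_le hE (Sum.inr ()) (Sum.inl im))))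

lemma isDef_Phi {γ : Type} [Finite γ] (σ : Fin k → γ) (it : γ) :
    IsDef L {z : γ → ℝ | Phi (PZ S σ z) (z it)} := by
  apply isDef_exists_s18
  apply isDef_exists_s18
  -- variables: d = inl (inr ()), c = inr ()
  refine (isDef_GLBabs hE hS (fun i => Sum.inl (Sum.inl (σ i))) (Sum.inl (Sum.inr ()))).and'
    ((isDef_eqAddOne hE (Sum.inr ()) (Sum.inl (Sum.inr ()))).and' (IsDef.or' ?_ ?_))
  · -- case 1 branch
    refine IsDef.and' ?_ ?_
    · apply isDef_exists_s18
      exact isDef_InR1 hE hS (fun i => Sum.inl (Sum.inl (Sum.inl (σ i))))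
        (Sum.inl (Sum.inr ())) (Sum.inr ())
    · apply isDef_exists_s18
      apply isDef_exists_s18
      -- s1 = inl (inr ()), r1 = inr ()
      exact (isDef_isLUBf_InR1 hE hS
          (fun i => Sum.inl (Sum.inl (Sum.inl (Sum.inl (σ i)))))
          (Sum.inl (Sum.inl (Sum.inr ()))) (Sum.inl (Sum.inr ()))).and'
        ((isDef_addEq hE (Sum.inl (Sum.inr ())) (Sum.inr ()) (Sum.inr ())).and'
         (isDef_isGLBf_InA1 hE hS
          (fun i => Sum.inl (Sum.inl (Sum.inl (Sum.inl (σ i)))))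
          (Sum.inl (Sum.inl (Sum.inr ()))) (Sum.inr ())
          (Sum.inl (Sum.inl (Sum.inl (Sum.inl it))))))
  · -- case 2 branch
    refine IsDef.and' (IsDef.not' ?_) ?_
    · apply isDef_exists_s18
      exact isDef_InR1 hE hS (fun i => Sum.inl (Sum.inl (Sum.inl (σ i))))
        (Sum.inl (Sum.inr ())) (Sum.inr ())
    · apply isDef_exists_s18
      apply isDef_exists_s18
      apply isDef_exists_s18
      apply isDef_exists_s18
      -- s2 = inl inl inl inr, r2 = inl inl inr, xs = inl inr, q = inr
      exact (isDef_isLUBf_InR2 hE hS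
          (fun i => Sum.inl (Sum.inl (Sum.inl (Sum.inl (Sum.inl (Sum.inl (σ i)))))))
          (Sum.inl (Sum.inl (Sum.inl (Sum.inl (Sum.inr ())))))
          (Sum.inl (Sum.inl (Sum.inl (Sum.inr ()))))).and'
        ((isDef_addEq hE (Sum.inl (Sum.inl (Sum.inl (Sum.inr ()))))
            (Sum.inl (Sum.inl (Sum.inr ()))) (Sum.inl (Sum.inl (Sum.inr ())))).and'
         ((isDef_isGLBf_X2 hE hS
            (fun i => Sum.inl (Sum.inl (Sum.inl (Sum.inl (Sum.inl (Sum.inl (σ i)))))))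
            (Sum.inl (Sum.inl (Sum.inl (Sum.inl (Sum.inr ())))))
            (Sum.inl (Sum.inl (Sum.inr ()))) (Sum.inl (Sum.inr ()))).and'
          ((isDef_addEq hE (Sum.inl (Sum.inl (Sum.inr ()))) (Sum.inr ()) (Sum.inr ())).and'
           (isDef_addEq hE (Sum.inl (Sum.inl (Sum.inl (Sum.inl (Sum.inl (Sum.inl it))))))
            (Sum.inl (Sum.inr ())) (Sum.inr ())))))

end PhiDef


variable (L)

lemma oneStep (hL : DMinimal L) (k : ℕ) (S : Set ((Fin k ⊕ Unit) → ℝ)) (hS : IsDef L S) :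
    ∃ g : (Fin k → ℝ) → ℝ,
      (∀ a : Fin k → ℝ, (∃ t, Sum.elim a (fun _ => t) ∈ S) → Sum.elim a (fun _ => g a) ∈ S) ∧
      IsDef L {z : (Fin k ⊕ Unit) → ℝ |
        (∃ t, Sum.elim (fun i => z (Sum.inl i)) (fun _ => t) ∈ S) ∧
        z (Sum.inr ()) = g (fun i => z (Sum.inl i))} := by
  obtain ⟨hE, hmin⟩ := hL
  obtain ⟨N, hN⟩ := hmin k S hS
  refine ⟨fun a => eC {t | Sum.elim a (fun _ => t) ∈ S}, ?_, ?_⟩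
  · rintro a ⟨t, ht⟩
    obtain ⟨U, D, hU, hD, hdecomp⟩ := hN a
    exact eC_mem ⟨t, ht⟩ hU hD hdecomp
  · have hPhi := isDef_Phi hE hS (Sum.inl : Fin k → Fin k ⊕ Unit) (Sum.inr ())
    apply isDef_congr _ hPhi
    ext z
    obtain ⟨U, D, hU, hD, hdecomp⟩ := hN (fun i => z (Sum.inl i))
    show Phi (PZ S Sum.inl z) (z (Sum.inr ())) ↔ _
    have := phi_iff hU hD hdecomp (z (Sum.inr ()))
    exact this

variable {L}

lemma isDef_iInter {γ ι : Type} [Finite ι] {s : ι → Set (γ → ℝ)}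
    (h : ∀ i, IsDef L (s i)) : IsDef L (⋂ i, s i) := by
  classical
  cases nonempty_fintype ι
  have key : ∀ t : Finset ι, IsDef L (⋂ i ∈ t, s i) := by
    intro t
    induction t using Finset.induction_on with
    | empty =>
      have : IsDef L (Set.univ : Set (γ → ℝ)) := Set.definable_univ
      simpa using this
    | insert _ _ anotmem ih' =>
      rw [Finset.set_biInter_insert]
      exact (h _).inter ih'
  have : (⋂ i, s i) = ⋂ i ∈ (Finset.univ : Finset ι), s i := by simp
  rw [this]
  exact key _

def sigY (m n : ℕ) : Fin (m + (n + 1)) → (Fin (m + n) ⊕ Unit) := fun j =>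
  if h : (j : ℕ) < m + n then Sum.inl ⟨j, h⟩ else Sum.inr ()

lemma sigY_castSucc (m n : ℕ) (j : Fin (m + n)) :
    sigY m n j.castSucc = Sum.inl j := by
  unfold sigY
  rw [dif_pos (by simpa using j.2)]
  exact congrArg Sum.inl (Fin.ext (by simp))

lemma sigY_last (m n : ℕ) : sigY m n (Fin.last (m + n)) = Sum.inr () := by
  unfold sigY
  rw [dif_neg (by simp)]

lemma elim_sigY (m n : ℕ) (y : Fin (m + n) → ℝ) (t : ℝ) :
    (fun j => Sum.elim y (fun _ => t) (sigY m n j)) = Fin.snoc y t := by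
  funext j
  unfold sigY
  by_cases h : (j : ℕ) < m + n <;> simp [h, Fin.snoc, Fin.castLT]

lemma castAdd_eq_castSucc (m n : ℕ) (i : Fin m) :
    Fin.castAdd (n + 1) i = Fin.castSucc (Fin.castAdd n i) := by
  apply Fin.ext; simp

variable (L)


/-- definable choice. -/
theorem stmt18 (L : FirstOrder.Language) [L.Structure ℝ] (hL : DMinimal L) (m n : ℕ)
    (X : Set (Fin m → ℝ)) (Y : Set (Fin (m + n) → ℝ)) (hX : IsDef L X) (hY : IsDef L Y)
    (hproj : (fun y : Fin (m + n) → ℝ => fun i : Fin m => y (Fin.castAdd n i)) '' Y = X) :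
    ∃ φ : (Fin m → ℝ) → (Fin (m + n) → ℝ), IsDefMapOn L X φ ∧
      (∀ x ∈ X, φ x ∈ Y) ∧
      ∀ x ∈ X, (fun i : Fin m => φ x (Fin.castAdd n i)) = x := by
  induction n with
  | zero =>
    refine ⟨fun x => fun j : Fin (m + 0) => x ⟨j.1, j.2⟩, ?_, ?_, ?_⟩
    · -- definability of the graph
      have h1 : IsDef L {z : Fin m ⊕ Fin (m + 0) → ℝ | (fun i => z (Sum.inl i)) ∈ X} :=
        isDef_preimage Sum.inl hX
      have h2 : IsDef L (⋂ j : Fin (m + 0),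
          {z : Fin m ⊕ Fin (m + 0) → ℝ | z (Sum.inr j) = z (Sum.inl ⟨j.1, j.2⟩)}) :=
        isDef_iInter (fun j => isDef_eq hL.1 _ _)
      apply isDef_congr _ (h1.inter h2)
      ext z
      simp only [IsDefMapOn, mem_inter_iff, mem_setOf_eq, mem_iInter, funext_iff]
    · intro x hx
      rw [← hproj] at hx
      obtain ⟨y, hy, hyproj⟩ := hx
      have : (fun j : Fin (m + 0) => x ⟨j.1, j.2⟩) = y := by
        funext j
        rw [← hyproj]
        exact congrArg y (Fin.ext (by simp))
      show (fun j : Fin (m + 0) => x ⟨j.1, j.2⟩) ∈ Y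
      rw [this]; exact hy
    · intro x _
      funext i
      exact congrArg x (Fin.ext (by simp))
  | succ n ih =>
    set S : Set ((Fin (m + n) ⊕ Unit) → ℝ) :=
      {w | (fun j => w (sigY m n j)) ∈ Y} with hSdef
    have hS : IsDef L S := isDef_preimage (sigY m n) hY
    set Y' : Set (Fin (m + n) → ℝ) := {y | ∃ t, Sum.elim y (fun _ => t) ∈ S} with hY'def
    have hY' : IsDef L Y' := by
      apply isDef_exists_s18
      exact isDef_memS hS Sum.inl (Sum.inr ())
    have hmemS : ∀ (y : Fin (m + n) → ℝ) (t : ℝ),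
        (Sum.elim y (fun _ => t) ∈ S) ↔ Fin.snoc y t ∈ Y := by
      intro y t
      show (fun j => Sum.elim y (fun _ => t) (sigY m n j)) ∈ Y ↔ _
      rw [elim_sigY]
    have hprojY' : (fun y : Fin (m + n) → ℝ => fun i : Fin m => y (Fin.castAdd n i)) '' Y' = X := by
      apply Set.Subset.antisymm
      · rintro x ⟨y, ⟨t, ht⟩, rfl⟩
        rw [hmemS] at ht
        rw [← hproj]
        refine ⟨Fin.snoc y t, ht, ?_⟩
        funext i
        show (Fin.snoc y t : Fin (m + n + 1) → ℝ) (Fin.castAdd (n + 1) i) = y (Fin.castAdd n i)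
        rw [castAdd_eq_castSucc]
        simp
      · intro x hx
        rw [← hproj] at hx
        obtain ⟨Ye, hYe, hYeproj⟩ := hx
        refine ⟨fun j => Ye j.castSucc, ⟨Ye (Fin.last (m + n)), ?_⟩, ?_⟩
        · rw [hmemS]
          have : Fin.snoc (fun j : Fin (m + n) => Ye j.castSucc) (Ye (Fin.last (m + n))) = Ye := by
            funext j
            induction j using Fin.lastCases with
            | last => rw [Fin.snoc_last]
            | cast j => rw [Fin.snoc_castSucc]
          rw [this]; exact hYe
        · funext i
          rw [← hYeproj]
          show Ye (Fin.castSucc (Fin.castAdd n i)) = Ye (Fin.castAdd (n + 1) i)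
          rw [castAdd_eq_castSucc]
      
    obtain ⟨ψ, hψdef, hψY', hψproj⟩ := ih Y' hY' hprojY'
    obtain ⟨g, hg, hgdef⟩ := oneStep L hL (m + n) S hS
    refine ⟨fun x => Fin.snoc (ψ x) (g (ψ x)), ?_, ?_, ?_⟩
    · -- definability
      have hG1 : IsDef L {z : Fin m ⊕ Fin (m + (n + 1)) → ℝ |
          (fun i => z ((Sum.elim (Sum.inl : Fin m → Fin m ⊕ Fin (m + (n+1)))
            (fun j : Fin (m+n) => Sum.inr j.castSucc)) i)) ∈
          {w : Fin m ⊕ Fin (m + n) → ℝ |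
            (fun i => w (Sum.inl i)) ∈ X ∧ (fun j => w (Sum.inr j)) = ψ (fun i => w (Sum.inl i))}} :=
        isDef_preimage _ hψdef
      have hG2 : IsDef L {z : Fin m ⊕ Fin (m + (n + 1)) → ℝ |
          (fun i' => z ((Sum.elim (fun j : Fin (m+n) => (Sum.inr j.castSucc : Fin m ⊕ Fin (m + (n+1))))
            (fun _ : Unit => Sum.inr (Fin.last (m + n)))) i')) ∈
          {w : (Fin (m + n) ⊕ Unit) → ℝ |
            (∃ t, Sum.elim (fun i => w (Sum.inl i)) (fun _ => t) ∈ S) ∧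
            w (Sum.inr ()) = g (fun i => w (Sum.inl i))}} :=
        isDef_preimage _ hgdef
      apply isDef_congr _ (hG1.inter hG2)
      ext z
      simp only [mem_inter_iff, mem_setOf_eq, Sum.elim_inl, Sum.elim_inr, IsDefMapOn]
      have hsc : ∀ (p : Fin (m + n) → ℝ) (v : ℝ) (j : Fin (m + n)),
          (Fin.snoc p v : Fin (m + n + 1) → ℝ) j.castSucc = p j := by
        intro p v j; simp
      have hsl : ∀ (p : Fin (m + n) → ℝ) (v : ℝ),
          (Fin.snoc p v : Fin (m + n + 1) → ℝ) (Fin.last (m + n)) = v := by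
        intro p v; simp
      constructor
      · rintro ⟨⟨hzX, hmid⟩, ⟨-, hlast⟩⟩
        refine ⟨hzX, funext fun j => ?_⟩
        induction j using Fin.lastCases with
        | last =>
          exact hlast.trans ((congrArg g hmid).trans (hsl _ _).symm)
        | cast j =>
          exact (congrFun hmid j).trans (hsc _ _ j).symm
      · rintro ⟨hzX, hzφ⟩
        have hmid : (fun j : Fin (m + n) => z (Sum.inr j.castSucc)) = ψ (fun i => z (Sum.inl i)) := by
          funext j
          exact (congrFun hzφ j.castSucc).trans (hsc _ _ j)
        have hlast : z (Sum.inr (Fin.last (m + n))) = g (ψ (fun i => z (Sum.inl i))) := by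
          exact (congrFun hzφ (Fin.last (m + n))).trans (hsl _ _)
        refine ⟨⟨hzX, hmid⟩, ⟨?_, by rw [hmid]; exact hlast⟩⟩
        rw [hmid]
        exact hψY' _ hzX
    · intro x hx
      have hfib : ∃ t, Sum.elim (ψ x) (fun _ => t) ∈ S := hψY' x hx
      have := hg (ψ x) hfib
      rw [hmemS] at this
      exact this
    · intro x hx
      funext i
      have h4 : (Fin.snoc (ψ x) (g (ψ x)) : Fin (m + n + 1) → ℝ) (Fin.castAdd (n + 1) i)
          = ψ x (Fin.castAdd n i) := by
        rw [castAdd_eq_castSucc]; simp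
      exact h4.trans (congrFun (hψproj x hx) i)


end DMinPaper
end
end
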